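/- arXiv:1811.09045 — 11 statements merged into one kernel-verified Lean document; each statement's English description precedes it below -/
import Mathlib

section
/- Let f be an XOS function on a finite set V with |V| = n ≥ 1, let X* ⊆ V be a set with f(X*) ≥ 0, and let d be an integer with 1 ≤ d ≤ n. Then there exists a subset X̂ ⊆ X* with |X̂| ≤ d and f(X̂) ≥ (d/n) · f(X*). -/
/-- Averaging lemma: from a set of size `m` one can pick `d` elements whose `g`-sum
is at least a `d/m` fraction of the total (stated cleared of denominators). -/
lemma topsum_aux {V : Type*} [DecidableEq V] (g : V → ℝ) :
    ∀ m : ℕ, ∀ S : Finset V, S.card = m → ∀ d ≤ m,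
      ∃ T ⊆ S, T.card = d ∧ (d : ℝ) * ∑ v ∈ S, g v ≤ (m : ℝ) * ∑ v ∈ T, g v := by
  intro m
  induction m with
  | zero =>
    intro S hS d hd
    interval_cases d
    exact ⟨∅, Finset.empty_subset _, rfl, by simp⟩
  | succ m ih =>
    intro S hS d hd
    rcases eq_or_lt_of_le hd with h | h
    · exact ⟨S, Finset.Subset.refl _, by rw [hS, h], by rw [h]⟩
    · have hdm : d ≤ m := Nat.lt_succ_iff.mp h
      have hne : S.Nonempty := Finset.card_pos.mp (by omega)
      obtain ⟨x, hxS, hxmin⟩ := S.exists_min_image g hne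
      have hcard : (S.erase x).card = m := by
        rw [Finset.card_erase_of_mem hxS, hS]; rfl
      obtain ⟨T, hTsub, hTcard, hTsum⟩ := ih (S.erase x) hcard d hdm
      refine ⟨T, hTsub.trans (Finset.erase_subset _ _), hTcard, ?_⟩
      have hsplit : ∑ v ∈ S, g v = g x + ∑ v ∈ S.erase x, g v :=
        (Finset.add_sum_erase S g hxS).symm
      have hTx : (d : ℝ) * g x ≤ ∑ v ∈ T, g v := by
        calc (d : ℝ) * g x = ∑ _v ∈ T, g x := by rw [Finset.sum_const, hTcard]; ring
        _ ≤ ∑ v ∈ T, g v := Finset.sum_le_sum fun v hv =>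
            hxmin v (Finset.mem_of_mem_erase (hTsub hv))
      push_cast
      rw [hsplit]
      nlinarith [hTsum, hTx]

/-- For an XOS function `f` on a finite set `V` with `|V| = n ≥ 1`, a set
`X* ⊆ V` with `f(X*) ≥ 0`, and an integer `1 ≤ d ≤ n`, there is `X̂ ⊆ X*` with `|X̂| ≤ d`
and `f(X̂) ≥ (d/n) · f(X*)`. -/
theorem stmt1 {V : Type*} [Fintype V] {k : ℕ}
    (w : Fin k → V → ℝ) (f : Finset V → ℝ)
    (hf : ∀ X : Finset V, IsGreatest (Set.range fun i : Fin k => ∑ v ∈ X, w i v) (f X))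
    {n : ℕ} (hn : Fintype.card V = n) (hn1 : 1 ≤ n)
    (Xstar : Finset V) (hXstar : 0 ≤ f Xstar)
    {d : ℕ} (hd1 : 1 ≤ d) (hdn : d ≤ n) :
    ∃ Xhat : Finset V, Xhat ⊆ Xstar ∧ Xhat.card ≤ d ∧
      (d : ℝ) / n * f Xstar ≤ f Xhat := by
  classical
  obtain ⟨⟨i, hi⟩, _⟩ := hf Xstar
  set m := Xstar.card with hm
  have hmn : m ≤ n := hn ▸ Finset.card_le_univ Xstar
  set d' := min d m with hd'
  obtain ⟨T, hTsub, hTcard, hTsum⟩ :=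
    topsum_aux (w i) m Xstar rfl d' (min_le_right _ _)
  refine ⟨T, hTsub, hTcard ▸ min_le_left _ _, ?_⟩
  have hfT : ∑ v ∈ T, w i v ≤ f T := (hf T).2 ⟨i, rfl⟩
  have hsum : ∑ v ∈ Xstar, w i v = f Xstar := hi
  rw [hsum] at hTsum
  have hkey : (d : ℝ) * m ≤ (d' : ℝ) * n := by
    have : d * m ≤ d' * n := by
      rcases le_total d m with h | h
      · simp only [hd', min_eq_left h]; exact Nat.mul_le_mul_left d hmn
      · simp only [hd', min_eq_right h]
        calc d * m ≤ n * m := Nat.mul_le_mul_right m hdn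
        _ = m * n := Nat.mul_comm _ _
    exact_mod_cast this
  have hn0 : (0 : ℝ) < n := by exact_mod_cast hn1
  rcases Nat.eq_zero_or_pos m with hm0 | hm0
  · -- Xstar is empty, so f Xstar = 0 and T = ∅ ⊆ Xstar works
    have hX0 : Xstar = ∅ := Finset.card_eq_zero.mp hm0
    have hT0 : T = ∅ := Finset.subset_empty.mp (hX0 ▸ hTsub)
    have hfX0 : f Xstar = 0 := by rw [← hsum, hX0, Finset.sum_empty]
    have hfT0 : (0 : ℝ) ≤ f T := by
      rw [hT0]; rw [hT0, Finset.sum_empty] at hfT; exact hfT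
    rw [hfX0, mul_zero]
    exact hfT0
  · have hm0' : (0 : ℝ) < m := by exact_mod_cast hm0
    rw [div_mul_eq_mul_div, div_le_iff₀ hn0]
    nlinarith [mul_le_mul_of_nonneg_right hkey hXstar,
      mul_le_mul_of_nonneg_left hTsum hn0.le,
      mul_le_mul_of_nonneg_left hfT (mul_nonneg hn0.le hm0'.le)]
end

section
/- Let n ≥ 2 be an integer, let ε > 0, set ρ := εn / log n, and assume ρ ≥ 2e/(e−2). Let s be an integer with 2 ≤ s ≤ n and let m := ⌈2s/ρ⌉. Then the ratio of binomial coefficients satisfies C(s, m) / C(n, m) ≥ n^{−(1/ε + 1)}. (Equivalently: a uniformly random m-element subset of an n-element set is contained in a fixed s-element subset with probability at least 1/n^{1/ε + 1}.) -/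
/-- For `n ≥ 2`, `ε > 0`, `ρ := εn / log n` with `ρ ≥ 2e/(e−2)`, an integer
`2 ≤ s ≤ n` and `m := ⌈2s/ρ⌉`, we have `C(s,m)/C(n,m) ≥ n^{−(1/ε+1)}`. -/
theorem stmt2 {n : ℕ} (hn : 2 ≤ n) {ε : ℝ} (hε : 0 < ε)
    (ρ : ℝ) (hρ : ρ = ε * n / Real.log n)
    (hρ2 : 2 * Real.exp 1 / (Real.exp 1 - 2) ≤ ρ)
    {s : ℕ} (hs : 2 ≤ s) (hsn : s ≤ n)
    (m : ℕ) (hm : m = ⌈(2 * s : ℝ) / ρ⌉₊) :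
    (n : ℝ) ^ (-(1 / ε + 1) : ℝ) ≤ (s.choose m : ℝ) / (n.choose m : ℝ) := by
  have he2 : (2:ℝ) < Real.exp 1 := by
    have := Real.exp_one_gt_d9; linarith
  have he4 : Real.exp 1 ≤ 4 := by
    have := Real.exp_one_lt_d9; linarith
  have hepos : (0:ℝ) < Real.exp 1 := by linarith
  have hn2 : (2:ℝ) ≤ n := by exact_mod_cast hn
  have hn0 : (0:ℝ) < n := by linarith
  have hs2 : (2:ℝ) ≤ (s:ℝ) := by exact_mod_cast hs
  have hs0 : (0:ℝ) < s := by linarith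
  have hsn' : (s:ℝ) ≤ n := by exact_mod_cast hsn
  have hlogn : 0 < Real.log n := Real.log_pos (by linarith)
  have hρpos : 0 < ρ := lt_of_lt_of_le (div_pos (by positivity) (by linarith)) hρ2
  -- bound 2s/ρ ≤ s(e-2)/e = s - 2s/e
  have hqnn : (0:ℝ) ≤ 2 * s := by linarith
  have hstep : 2 * (s:ℝ) / ρ ≤ (s:ℝ) - 2 * s / Real.exp 1 := by
    have h1 : 2 * (s:ℝ) / ρ ≤ 2 * s / (2 * Real.exp 1 / (Real.exp 1 - 2)) :=
      div_le_div_of_nonneg_left hqnn (div_pos (by positivity) (by linarith)) hρ2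
    have h2 : 2 * (s:ℝ) / (2 * Real.exp 1 / (Real.exp 1 - 2)) = s - 2 * s / Real.exp 1 := by
      field_simp
    linarith
  have hms : m ≤ s := by
    rw [hm]
    exact Nat.ceil_le.mpr (by
      have : 2 * (s:ℝ) / Real.exp 1 ≥ 0 := by positivity
      linarith)
  have hmn : m ≤ n := le_trans hms hsn
  have hm1 : (m:ℝ) ≤ 2 * s / ρ + 1 := by
    rw [hm]
    exact le_of_lt (Nat.ceil_lt_add_one (by positivity))
  have hkey : 2 * (s:ℝ) / Real.exp 1 ≤ (s:ℝ) + 1 - m := by linarith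
  -- reduce choose ratio to descFactorial ratio
  have hsc : 0 < (s.choose m : ℝ) := by exact_mod_cast Nat.choose_pos hms
  have hnc : 0 < (n.choose m : ℝ) := by exact_mod_cast Nat.choose_pos hmn
  have hratio : ((s.descFactorial m : ℝ)) / (n.descFactorial m : ℝ)
      = (s.choose m : ℝ) / (n.choose m : ℝ) := by
    rw [Nat.descFactorial_eq_factorial_mul_choose, Nat.descFactorial_eq_factorial_mul_choose]
    push_cast
    rw [mul_div_mul_left]
    positivity
  rw [← hratio]
  have hcast : (((s + 1 - m : ℕ)) : ℝ) = (s:ℝ) + 1 - m := by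
    have : m ≤ s + 1 := le_trans hms (Nat.le_succ s)
    push_cast [Nat.cast_sub this]
    ring
  have hdlow : ((s:ℝ) + 1 - m) ^ m ≤ (s.descFactorial m : ℝ) := by
    rw [← hcast]
    exact_mod_cast Nat.pow_sub_le_descFactorial s m
  have hdup : (n.descFactorial m : ℝ) ≤ (n:ℝ) ^ m := by
    exact_mod_cast Nat.descFactorial_le_pow n m
  have hdpos : (0:ℝ) < (n.descFactorial m : ℝ) := by
    have : 0 < n.descFactorial m := by
      rw [Nat.descFactorial_eq_factorial_mul_choose]
      exact Nat.mul_pos (Nat.factorial_pos m) (Nat.choose_pos hmn)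
    exact_mod_cast this
  have hpow : ((s:ℝ) + 1 - m) ^ m / (n:ℝ) ^ m
      ≤ (s.descFactorial m : ℝ) / (n.descFactorial m : ℝ) :=
    div_le_div₀ (Nat.cast_nonneg _) hdlow hdpos hdup
  -- the main analytic estimate
  set X : ℝ := 2 * s / (Real.exp 1 * n) with hX
  have hXpos : 0 < X := by positivity
  have hkey' : 2 * (s:ℝ) ≤ ((s:ℝ) + 1 - m) * Real.exp 1 := (div_le_iff₀ hepos).mp hkey
  have hbase : X ≤ ((s:ℝ) + 1 - m) / n := by
    rw [hX, div_le_div_iff₀ (by positivity) hn0]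
    have := mul_le_mul_of_nonneg_right hkey' (le_of_lt hn0)
    linarith
  have hX1 : X ^ m ≤ ((s:ℝ) + 1 - m) ^ m / (n:ℝ) ^ m :=
    calc X ^ m ≤ (((s:ℝ) + 1 - m) / n) ^ m := pow_le_pow_left₀ (le_of_lt hXpos) hbase m
      _ = ((s:ℝ) + 1 - m) ^ m / (n:ℝ) ^ m := div_pow _ _ _
  have hlogX : Real.log X = Real.log 2 + Real.log s - 1 - Real.log n := by
    rw [hX, Real.log_div (by positivity) (by positivity), Real.log_mul two_ne_zero (by positivity),
      Real.log_mul (Real.exp_ne_zero 1) (by positivity), Real.log_exp]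
    ring
  have hlogs : Real.log 2 ≤ Real.log s := Real.log_le_log (by norm_num) hs2
  have hlogsn : Real.log s ≤ Real.log n := Real.log_le_log hs0 hsn'
  have hlog2 : (1:ℝ) ≤ Real.log 2 + Real.log s := by
    have h4 : Real.log (Real.exp 1) ≤ Real.log 4 := Real.log_le_log (Real.exp_pos 1) he4
    rw [Real.log_exp] at h4
    have : Real.log 4 = Real.log 2 + Real.log 2 := by
      rw [show (4:ℝ) = 2 * 2 by norm_num, Real.log_mul two_ne_zero two_ne_zero]
    linarith
  -- claim A : 2*(s/n)*L ≤ 1 where L = 1 + log n - log 2 - log s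
  set L : ℝ := 1 + Real.log n - Real.log 2 - Real.log s with hL
  have hLpos : 0 < L := by
    have hlog2lt : Real.log 2 < 1 := by
      have := Real.log_two_lt_d9; linarith
    rw [hL]; linarith
  have hclaimA : 2 * ((s:ℝ) / n) * L ≤ 1 := by
    have hu : (0:ℝ) < (n:ℝ) / (2 * s) := by positivity
    have hlu : Real.log ((n:ℝ) / (2 * s)) ≤ (n:ℝ) / (2 * s) - 1 :=
      Real.log_le_sub_one_of_pos hu
    have hlu2 : Real.log ((n:ℝ) / (2 * s)) = Real.log n - Real.log 2 - Real.log s := by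
      rw [Real.log_div (by positivity) (by positivity), Real.log_mul two_ne_zero (by positivity)]
      ring
    have hLeq : L = 1 + Real.log ((n:ℝ) / (2 * s)) := by rw [hlu2, hL]; ring
    have h1 : L ≤ (n:ℝ) / (2 * s) := by rw [hLeq]; linarith
    have h2 : 2 * ((s:ℝ) / n) * L ≤ 2 * ((s:ℝ) / n) * ((n:ℝ) / (2 * s)) :=
      mul_le_mul_of_nonneg_left h1 (by positivity)
    have h3 : 2 * ((s:ℝ) / n) * ((n:ℝ) / (2 * s)) = 1 := by
      field_simp
    linarith
  have hclaimB : L ≤ Real.log n := by rw [hL]; linarith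
  -- m bound in terms of log n
  have h2sρ : 2 * (s:ℝ) / ρ = 2 * s * Real.log n / (ε * n) := by
    rw [hρ]; field_simp
  have hmL : (m:ℝ) * L ≤ (1 / ε + 1) * Real.log n := by
    have h1 : (m:ℝ) * L ≤ (2 * s * Real.log n / (ε * n) + 1) * L := by
      apply mul_le_mul_of_nonneg_right _ (le_of_lt hLpos)
      rw [← h2sρ]; exact hm1
    have h2 : (2 * (s:ℝ) * Real.log n / (ε * n)) * L
        = (2 * ((s:ℝ) / n) * L) * (Real.log n / ε) := by ring
    have h3 : (2 * ((s:ℝ) / n) * L) * (Real.log n / ε) ≤ 1 * (Real.log n / ε) :=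
      mul_le_mul_of_nonneg_right hclaimA (by positivity)
    have h4 : (1 / ε + 1) * Real.log n = Real.log n / ε + Real.log n := by ring
    linarith [hclaimB]
  -- finish: n^(-(1/ε+1)) ≤ X^m
  have hfinal : (n:ℝ) ^ (-(1 / ε + 1) : ℝ) ≤ X ^ m := by
    rw [Real.rpow_def_of_pos hn0]
    have hXm : X ^ m = Real.exp ((m:ℝ) * Real.log X) := by
      rw [Real.exp_nat_mul, Real.exp_log hXpos]
    rw [hXm]
    apply Real.exp_le_exp.mpr
    have : (m:ℝ) * Real.log X = -((m:ℝ) * L) := by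
      rw [hlogX, hL]; ring
    rw [this]
    linarith
  calc (n:ℝ) ^ (-(1 / ε + 1) : ℝ) ≤ X ^ m := hfinal
    _ ≤ ((s:ℝ) + 1 - m) ^ m / (n:ℝ) ^ m := hX1
    _ ≤ _ := hpow
end

section
/- Let f be an XOS function on a finite set V, let X* ⊆ V be nonempty with s := |X*|, and let m be an integer with 1 ≤ m ≤ s. Then Σ_{X ⊆ X*, |X| = m} f(X) ≥ C(s, m) · (m/s) · f(X*). (Equivalently: the expected value of f on a uniformly random m-element subset of X* is at least (m/s) · f(X*).) -/
/-!
Let `w` be an additive function attaining `f X*`. Each `v ∈ X*` lies in the same number of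
`m`-subsets of `X*`, so by double counting `s · Σ_X w(X) = m · C(s, m) · w(X*)`; summing
`f X ≥ w(X)` over the `m`-subsets gives the bound.
-/

open Finset

theorem card_mul_card_filter_mem_powersetCard {α : Type*} [DecidableEq α] (S : Finset α)
    (m : ℕ) {v : α} (hv : v ∈ S) :
    #S * #{X ∈ S.powersetCard m | v ∈ X} = (#S).choose m * m := by
  obtain ⟨n, hn⟩ : ∃ n, #S = n + 1 := Nat.exists_eq_add_one.2 (card_pos.2 ⟨v, hv⟩)
  cases m with
  | zero => simp
  | succ k =>
    have hcount := card_filter_powersetCard_subset {v} S (k + 1) (singleton_subset_iff.2 hv)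
      (by simp)
    simp only [singleton_subset_iff, card_singleton, add_tsub_cancel_right] at hcount
    rw [hcount, hn, add_tsub_cancel_right, Nat.add_one_mul_choose_eq]

theorem card_nsmul_sum_powersetCard_sum {α M : Type*} [AddCommMonoid M] (S : Finset α)
    (m : ℕ) (g : α → M) :
    #S • ∑ X ∈ S.powersetCard m, ∑ v ∈ X, g v = ((#S).choose m * m) • ∑ v ∈ S, g v := by
  classical
  rw [sum_comm' (t' := S) (s' := fun v => {X ∈ S.powersetCard m | v ∈ X})
    fun X v => ⟨fun ⟨hX, hv⟩ => ⟨mem_filter.2 ⟨hX, hv⟩, (mem_powersetCard.1 hX).1 hv⟩,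
      fun ⟨hX, _⟩ => ⟨(mem_filter.1 hX).1, (mem_filter.1 hX).2⟩⟩]
  simp only [smul_sum, sum_const, smul_smul]
  exact sum_congr rfl fun v hv => by rw [card_mul_card_filter_mem_powersetCard S m hv]

theorem stmt3_general {V : Type*} {k : ℕ}
    (w : Fin k → V → ℝ) (f : Finset V → ℝ)
    (hf : ∀ X : Finset V, IsGreatest (Set.range fun i : Fin k => ∑ v ∈ X, w i v) (f X))
    (Xstar : Finset V) (hne : Xstar.Nonempty) {s : ℕ} (hs : s = Xstar.card)
    {m : ℕ} :
    (s.choose m : ℝ) * ((m : ℝ) / s) * f Xstar ≤ ∑ X ∈ Xstar.powersetCard m, f X := by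
  obtain ⟨i, hi⟩ : ∃ i, ∑ v ∈ Xstar, w i v = f Xstar := (hf Xstar).1
  have hs_pos : (0 : ℝ) < s := by exact_mod_cast hs ▸ hne.card_pos
  have hcount := card_nsmul_sum_powersetCard_sum Xstar m (w i)
  rw [hi, ← hs, nsmul_eq_mul, nsmul_eq_mul] at hcount
  push_cast at hcount
  calc (s.choose m : ℝ) * ((m : ℝ) / s) * f Xstar
      = ∑ X ∈ Xstar.powersetCard m, ∑ v ∈ X, w i v := by
        field_simp
        linarith
    _ ≤ ∑ X ∈ Xstar.powersetCard m, f X := sum_le_sum fun X _ => (hf X).2 ⟨i, rfl⟩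

/-- For an XOS function `f` on a finite set `V`, a nonempty `X* ⊆ V` with
`s := |X*|`, and an integer `1 ≤ m ≤ s`, the sum of `f` over all `m`-element subsets of `X*`
is at least `C(s,m) · (m/s) · f(X*)`. -/
theorem stmt3 {V : Type*} [Fintype V] [DecidableEq V] {k : ℕ}
    (w : Fin k → V → ℝ) (f : Finset V → ℝ)
    (hf : ∀ X : Finset V, IsGreatest (Set.range fun i : Fin k => ∑ v ∈ X, w i v) (f X))
    (Xstar : Finset V) (hne : Xstar.Nonempty) {s : ℕ} (hs : s = Xstar.card)
    {m : ℕ} (hm1 : 1 ≤ m) (hms : m ≤ s) :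
    (s.choose m : ℝ) * ((m : ℝ) / s) * f Xstar ≤ ∑ X ∈ Xstar.powersetCard m, f X :=
  stmt3_general w f hf Xstar hne hs
end

section
/- Let f be a 2-XOS function on a finite set V with representation (f_1, f_2) and with f(v) > 0 for all v ∈ V. For i = 1, 2, let V_i^* := {v ∈ V : f_i(v) = f(v)} and Y_i := V_i^* ∪ {v ∈ V ∖ V_i^* : f(V_i^* ∪ {v}) > f(V_i^*)}. Then Y_1 or Y_2 is a maximizer of f, i.e., max{f(Y_1), f(Y_2)} = max_{X ⊆ V} f(X). -/
open Finset

lemma sum_le_posPart {V : Type*} [Fintype V] [DecidableEq V] (w : V → ℝ) (X : Finset V) :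
    ∑ v ∈ X, w v ≤ ∑ v ∈ univ.filter (fun v => 0 < w v), w v := by
  calc ∑ v ∈ X, w v ≤ ∑ v ∈ X.filter (fun v => 0 < w v), w v := by
        rw [← Finset.sum_filter_add_sum_filter_not X (fun v => 0 < w v)]
        have : ∑ v ∈ X.filter (fun v => ¬ 0 < w v), w v ≤ 0 :=
          Finset.sum_nonpos fun v hv => not_lt.1 (mem_filter.1 hv).2
        linarith
    _ ≤ _ := Finset.sum_le_sum_of_subset_of_nonneg
        (by intro v hv; rw [mem_filter] at hv ⊢; exact ⟨mem_univ v, hv.2⟩)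
        (fun v hv _ => ((mem_filter.1 hv).2).le)

lemma key_lemma {V : Type*} [Fintype V] [DecidableEq V]
    (w₁ w₂ : V → ℝ) (f : Finset V → ℝ)
    (hf : ∀ X : Finset V, f X = max (∑ v ∈ X, w₁ v) (∑ v ∈ X, w₂ v))
    (hpos : ∀ v : V, 0 < f {v})
    (V₁ Y₁ : Finset V)
    (hV₁ : ∀ v : V, v ∈ V₁ ↔ w₁ v = f {v})
    (hY₁ : ∀ v : V, v ∈ Y₁ ↔ v ∈ V₁ ∨ (v ∉ V₁ ∧ f V₁ < f (insert v V₁))) :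
    ∑ v ∈ univ.filter (fun v => 0 < w₁ v), w₁ v ≤ f Y₁ := by
  have hfv : ∀ v, f {v} = max (w₁ v) (w₂ v) := by intro v; simpa using hf {v}
  have hmemV₁ : ∀ v, v ∈ V₁ ↔ w₂ v ≤ w₁ v := by
    intro v; rw [hV₁ v, hfv v]
    constructor
    · intro h; by_contra hc; push_neg at hc
      rw [max_eq_right hc.le] at h; linarith
    · intro h; rw [max_eq_left h]
  have hV₁pos : ∀ v ∈ V₁, 0 < w₁ v := by
    intro v hv; have := hpos v; rwa [(hV₁ v).1 hv]
  have hnotV₁ : ∀ v, v ∉ V₁ → w₁ v < w₂ v := by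
    intro v hv; by_contra hc; push_neg at hc; exact hv ((hmemV₁ v).2 hc)
  have hnotV₁pos : ∀ v, v ∉ V₁ → 0 < w₂ v := by
    intro v hv
    have := hpos v; rwa [hfv v, max_eq_right (hnotV₁ v hv).le] at this
  have hfV₁ : f V₁ = ∑ v ∈ V₁, w₁ v := by
    rw [hf]; exact max_eq_left (Finset.sum_le_sum fun v hv => (hmemV₁ v).1 hv)
  set P := univ.filter (fun v => 0 < w₁ v) with hP
  have hV₁P : V₁ ⊆ P := fun v hv => mem_filter.2 ⟨mem_univ v, hV₁pos v hv⟩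
  have hV₁Y : V₁ ⊆ Y₁ := fun v hv => (hY₁ v).2 (Or.inl hv)
  have hPA : P \ V₁ ⊆ Y₁ \ V₁ := by
    intro v hv
    rw [mem_sdiff] at hv ⊢
    refine ⟨(hY₁ v).2 (Or.inr ⟨hv.2, ?_⟩), hv.2⟩
    have hvp : 0 < w₁ v := (mem_filter.1 hv.1).2
    rw [hfV₁, hf (insert v V₁)]
    calc ∑ x ∈ V₁, w₁ x < w₁ v + ∑ x ∈ V₁, w₁ x := by linarith
      _ = ∑ x ∈ insert v V₁, w₁ x := (Finset.sum_insert hv.2).symm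
      _ ≤ _ := le_max_left _ _
  have hsumP : ∑ v ∈ P, w₁ v = ∑ v ∈ P \ V₁, w₁ v + ∑ v ∈ V₁, w₁ v :=
    (Finset.sum_sdiff hV₁P).symm
  by_cases hA : ∀ v ∈ Y₁ \ V₁, 0 < w₁ v
  · -- every extra element has positive w₁, so w₁(Y₁) ≥ w₁(P)
    have h1 : ∑ v ∈ Y₁, w₁ v = ∑ v ∈ Y₁ \ V₁, w₁ v + ∑ v ∈ V₁, w₁ v :=
      (Finset.sum_sdiff hV₁Y).symm
    have h2 : ∑ v ∈ P \ V₁, w₁ v ≤ ∑ v ∈ Y₁ \ V₁, w₁ v :=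
      Finset.sum_le_sum_of_subset_of_nonneg hPA fun v hv _ => (hA v hv).le
    rw [hf Y₁]
    calc ∑ v ∈ P, w₁ v ≤ ∑ v ∈ Y₁, w₁ v := by rw [hsumP, h1]; linarith
      _ ≤ _ := le_max_left _ _
  · push_neg at hA
    obtain ⟨a, ha, hna⟩ := hA
    rw [mem_sdiff] at ha
    rcases (hY₁ a).1 ha.1 with h | ⟨h1, h2⟩
    · exact absurd h ha.2
    have hD : ∑ v ∈ V₁, w₁ v < w₂ a + ∑ v ∈ V₁, w₂ v := by
      rw [hfV₁, hf (insert a V₁), Finset.sum_insert h1, Finset.sum_insert h1] at h2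
      rcases max_cases (w₁ a + ∑ v ∈ V₁, w₁ v) (w₂ a + ∑ v ∈ V₁, w₂ v) with ⟨he, _⟩ | ⟨he, _⟩
      · rw [he] at h2; linarith
      · rw [he] at h2; linarith
    have h1' : ∑ v ∈ Y₁, w₂ v = ∑ v ∈ Y₁ \ V₁, w₂ v + ∑ v ∈ V₁, w₂ v :=
      (Finset.sum_sdiff hV₁Y).symm
    have haP : a ∉ P \ V₁ := by
      rw [mem_sdiff, hP, mem_filter]
      push_neg
      intro hc; exact absurd hc.2 (not_lt.2 hna)
    have hsub : insert a (P \ V₁) ⊆ Y₁ \ V₁ := by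
      intro v hv
      rcases Finset.mem_insert.1 hv with rfl | hv
      · exact mem_sdiff.2 ⟨ha.1, ha.2⟩
      · exact hPA hv
    have h2' : ∑ v ∈ insert a (P \ V₁), w₂ v ≤ ∑ v ∈ Y₁ \ V₁, w₂ v := by
      refine Finset.sum_le_sum_of_subset_of_nonneg hsub fun v hv _ => ?_
      exact (hnotV₁pos v (mem_sdiff.1 hv).2).le
    have h3' : ∑ v ∈ P \ V₁, w₁ v ≤ ∑ v ∈ P \ V₁, w₂ v :=
      Finset.sum_le_sum fun v hv => (hnotV₁ v (mem_sdiff.1 hv).2).le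
    rw [hf Y₁]
    refine le_trans ?_ (le_max_right _ _)
    rw [h1', hsumP]
    rw [Finset.sum_insert haP] at h2'
    linarith

/-- For a 2-XOS function `f` with representation `(f_1, f_2)` and `f(v) > 0`
for all `v`, with cliques `V_i^* = {v | f_i(v) = f(v)}` and
`Y_i = V_i^* ∪ {v ∉ V_i^* | f(V_i^* ∪ {v}) > f(V_i^*)}`, the better of `Y_1, Y_2` is a
maximizer of `f`: `max{f(Y_1), f(Y_2)} = max_{X ⊆ V} f(X)`. -/
theorem stmt7 {V : Type*} [Fintype V] [DecidableEq V]
    (w₁ w₂ : V → ℝ) (f : Finset V → ℝ)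
    (hf : ∀ X : Finset V, f X = max (∑ v ∈ X, w₁ v) (∑ v ∈ X, w₂ v))
    (hpos : ∀ v : V, 0 < f {v})
    (V₁ V₂ Y₁ Y₂ : Finset V)
    (hV₁ : ∀ v : V, v ∈ V₁ ↔ w₁ v = f {v})
    (hV₂ : ∀ v : V, v ∈ V₂ ↔ w₂ v = f {v})
    (hY₁ : ∀ v : V, v ∈ Y₁ ↔ v ∈ V₁ ∨ (v ∉ V₁ ∧ f V₁ < f (insert v V₁)))
    (hY₂ : ∀ v : V, v ∈ Y₂ ↔ v ∈ V₂ ∨ (v ∉ V₂ ∧ f V₂ < f (insert v V₂))) :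
    IsGreatest (Set.range fun X : Finset V => f X) (max (f Y₁) (f Y₂)) := by
  constructor
  · rcases max_cases (f Y₁) (f Y₂) with ⟨he, _⟩ | ⟨he, _⟩ <;> rw [he]
    · exact ⟨Y₁, rfl⟩
    · exact ⟨Y₂, rfl⟩
  · rintro y ⟨X, rfl⟩
    have k1 := key_lemma w₁ w₂ f hf hpos V₁ Y₁ hV₁ hY₁
    have k2 := key_lemma w₂ w₁ f (fun X => by rw [hf X, max_comm]) hpos V₂ Y₂ hV₂ hY₂
    simp only [hf X]
    exact max_le (((sum_le_posPart w₁ X).trans k1).trans (le_max_left _ _))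
      (((sum_le_posPart w₂ X).trans k2).trans (le_max_right _ _))
end

section
/- Let f be a 2-XOS function on a finite set V with representation (f_1, f_2) and with f(v) > 0 for all v ∈ V. Let V_1^* := {v ∈ V : f_1(v) = f(v)} and suppose that X* := {v ∈ V : f_1(v) > 0} is a maximizer of f, i.e., f(X*) = max_{X ⊆ V} f(X). Then V_1^* ∪ {v ∈ V ∖ V_1^* : f(V_1^* ∪ {v}) > f(V_1^*)} = X*. -/
/-- For a 2-XOS function `f` with representation `(f_1, f_2)`, `f(v) > 0` for
all `v`, clique `V_1^* = {v | f_1(v) = f(v)}`, if `X* = {v | f_1(v) > 0}` is a maximizer of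
`f`, then `V_1^* ∪ {v ∉ V_1^* | f(V_1^* ∪ {v}) > f(V_1^*)} = X*`. -/
theorem stmt8 {V : Type*} [Fintype V] [DecidableEq V]
    (w₁ w₂ : V → ℝ) (f : Finset V → ℝ)
    (hf : ∀ X : Finset V, f X = max (∑ v ∈ X, w₁ v) (∑ v ∈ X, w₂ v))
    (hpos : ∀ v : V, 0 < f {v})
    (V₁ Xstar Y₁ : Finset V)
    (hV₁ : ∀ v : V, v ∈ V₁ ↔ w₁ v = f {v})
    (hXstar : ∀ v : V, v ∈ Xstar ↔ 0 < w₁ v)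
    (hmax : ∀ X : Finset V, f X ≤ f Xstar)
    (hY₁ : ∀ v : V, v ∈ Y₁ ↔ v ∈ V₁ ∨ (v ∉ V₁ ∧ f V₁ < f (insert v V₁))) :
    Y₁ = Xstar := by
  have hfv : ∀ v : V, f {v} = max (w₁ v) (w₂ v) := by
    intro v; simpa using hf {v}
  -- For v ∈ V₁ : w₂ v ≤ w₁ v and 0 < w₁ v
  have hV₁w : ∀ v ∈ V₁, w₂ v ≤ w₁ v := by
    intro v hv
    have h := (hV₁ v).1 hv
    have : w₂ v ≤ f {v} := (hfv v) ▸ le_max_right _ _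
    linarith
  have hV₁pos : ∀ v ∈ V₁, 0 < w₁ v := by
    intro v hv
    have h := (hV₁ v).1 hv
    have := hpos v
    linarith
  -- For v ∉ V₁ : w₁ v < w₂ v and w₂ v = f {v}
  have hnV₁ : ∀ v : V, v ∉ V₁ → w₁ v < w₂ v ∧ w₂ v = f {v} := by
    intro v hv
    have hne : w₁ v ≠ f {v} := fun h => hv ((hV₁ v).2 h)
    rcases le_or_gt (w₂ v) (w₁ v) with h | h
    · exact absurd ((hfv v).symm ▸ (max_eq_left h).symm) hne
    · exact ⟨h, ((hfv v).symm ▸ (max_eq_right h.le)).symm⟩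
  -- f V₁ = ∑ w₁ over V₁
  have hfV₁ : f V₁ = ∑ u ∈ V₁, w₁ u := by
    rw [hf]
    exact max_eq_left (Finset.sum_le_sum hV₁w)
  -- V₁ ⊆ Xstar
  have hsub : V₁ ⊆ Xstar := fun v hv => (hXstar v).2 (hV₁pos v hv)
  ext v
  rw [hY₁, hXstar]
  constructor
  · rintro (hv | ⟨hv, hlt⟩)
    · exact hV₁pos v hv
    · by_contra hle
      push_neg at hle
      have hw2 := hnV₁ v hv
      have hw2pos : 0 < w₂ v := by
        have := hpos v; linarith [hw2.2]
      -- from hlt : f V₁ < f (insert v V₁), deduce ∑ w₁ V₁ < w₂ v + ∑ w₂ V₁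
      have hkey : ∑ u ∈ V₁, w₁ u < w₂ v + ∑ u ∈ V₁, w₂ u := by
        rw [hfV₁] at hlt
        simp only [hf, Finset.sum_insert hv] at hlt
        rcases max_cases (w₁ v + ∑ u ∈ V₁, w₁ u) (w₂ v + ∑ u ∈ V₁, w₂ u) with
          ⟨heq, _⟩ | ⟨heq, _⟩ <;> rw [heq] at hlt <;> linarith
      -- v ∉ Xstar
      have hvX : v ∉ Xstar := fun h => absurd ((hXstar v).1 h) (not_lt.2 hle)
      -- sums over Xstar split
      have hsplit1 : ∑ u ∈ Xstar \ V₁, w₁ u + ∑ u ∈ V₁, w₁ u = ∑ u ∈ Xstar, w₁ u :=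
        Finset.sum_sdiff hsub
      have hsplit2 : ∑ u ∈ Xstar \ V₁, w₂ u + ∑ u ∈ V₁, w₂ u = ∑ u ∈ Xstar, w₂ u :=
        Finset.sum_sdiff hsub
      have hdiff : ∑ u ∈ Xstar \ V₁, w₁ u ≤ ∑ u ∈ Xstar \ V₁, w₂ u :=
        Finset.sum_le_sum (fun u hu => (hnV₁ u (Finset.mem_sdiff.1 hu).2).1.le)
      have hbig : f Xstar < w₂ v + ∑ u ∈ Xstar, w₂ u := by
        rw [hf]
        rcases le_total (∑ u ∈ Xstar, w₁ u) (∑ u ∈ Xstar, w₂ u) with h | h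
        · rw [max_eq_right h]; linarith
        · rw [max_eq_left h]; linarith
      have hins : w₂ v + ∑ u ∈ Xstar, w₂ u ≤ f (insert v Xstar) := by
        simp only [hf, Finset.sum_insert hvX]
        exact le_max_right (w₁ v + ∑ u ∈ Xstar, w₁ u) (w₂ v + ∑ u ∈ Xstar, w₂ u)
      have := hmax (insert v Xstar)
      linarith
  · intro hv
    by_cases hvV : v ∈ V₁
    · exact Or.inl hvV
    · refine Or.inr ⟨hvV, ?_⟩
      rw [hfV₁]
      simp only [hf, Finset.sum_insert hvV]
      calc ∑ u ∈ V₁, w₁ u < w₁ v + ∑ u ∈ V₁, w₁ u := by linarith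
        _ ≤ _ := le_max_left _ _
end

section
/- Let f be an XOS function on a finite set V with f(v) > 0 for all v ∈ V. Suppose V_1, …, V_ℓ ⊆ V satisfy V_1 ∪ ⋯ ∪ V_ℓ = V and f(V_i) = Σ_{v ∈ V_i} f(v) for each i ∈ [ℓ]. Then f(X) ≤ ℓ · max_{i ∈ [ℓ]} f(V_i) for every X ⊆ V. -/
/-- For an XOS function `f` on a finite set `V` with `f(v) > 0` for all `v`,
if `V_1, …, V_ℓ` cover `V` and `f(V_i) = ∑_{v ∈ V_i} f(v)` for each `i`, then
`f(X) ≤ ℓ · max_{i ∈ [ℓ]} f(V_i)` for every `X ⊆ V`. -/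
theorem stmt9 {V : Type*} [Fintype V] {k : ℕ}
    (w : Fin k → V → ℝ) (f : Finset V → ℝ)
    (hf : ∀ X : Finset V, IsGreatest (Set.range fun i : Fin k => ∑ v ∈ X, w i v) (f X))
    (hpos : ∀ v : V, 0 < f {v})
    {ℓ : ℕ} (hℓ : 0 < ℓ) (Vs : Fin ℓ → Finset V)
    (hcover : ∀ v : V, ∃ i : Fin ℓ, v ∈ Vs i)
    (hadd : ∀ i : Fin ℓ, f (Vs i) = ∑ v ∈ Vs i, f {v}) :
    ∀ X : Finset V, f X ≤ (ℓ : ℝ) * ⨆ i : Fin ℓ, f (Vs i) := by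
  classical
  intro X
  obtain ⟨⟨i, hi⟩, -⟩ := hf X
  have hw : ∀ v : V, w i v ≤ f {v} := fun v =>
    (hf {v}).2 ⟨i, by simp⟩
  have h1 : f X ≤ ∑ v ∈ X, f {v} := by
    rw [← hi]; exact Finset.sum_le_sum fun v _ => hw v
  have h2 : ∑ v ∈ X, f {v} ≤ ∑ v : V, f {v} :=
    Finset.sum_le_sum_of_subset_of_nonneg (Finset.subset_univ X)
      (fun v _ _ => (hpos v).le)
  have h3 : ∑ v : V, f {v} ≤ ∑ j : Fin ℓ, f (Vs j) := by
    have heq : ∀ j, f (Vs j) = ∑ v : V, if v ∈ Vs j then f {v} else 0 := by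
      intro j; rw [hadd, Finset.sum_ite_mem, Finset.univ_inter]
    simp_rw [heq]
    rw [Finset.sum_comm]
    apply Finset.sum_le_sum
    intro v _
    obtain ⟨j, hj⟩ := hcover v
    calc f {v} = if v ∈ Vs j then f {v} else 0 := by simp [hj]
      _ ≤ ∑ j' : Fin ℓ, if v ∈ Vs j' then f {v} else 0 :=
        Finset.single_le_sum (f := fun j' : Fin ℓ => if v ∈ Vs j' then f {v} else 0) (fun j' _ => by
          split <;> simp [(hpos v).le]) (Finset.mem_univ j)
  have h4 : ∑ j : Fin ℓ, f (Vs j) ≤ (ℓ : ℝ) * ⨆ j : Fin ℓ, f (Vs j) := by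
    have : ∀ j : Fin ℓ, f (Vs j) ≤ ⨆ j : Fin ℓ, f (Vs j) := fun j =>
      le_ciSup (Set.Finite.bddAbove (Set.finite_range fun j => f (Vs j))) j
    calc ∑ j : Fin ℓ, f (Vs j) ≤ ∑ _j : Fin ℓ, ⨆ j : Fin ℓ, f (Vs j) :=
          Finset.sum_le_sum fun j _ => this j
      _ = (ℓ : ℝ) * ⨆ j : Fin ℓ, f (Vs j) := by simp [mul_comm]
  linarith
end

section
/- Let k ≥ 2 and let f be a k-XOS function on a finite set V with representation (f_1, …, f_k) and with f(v) > 0 for all v ∈ V. For each i ∈ [k], let V_i^* := {v ∈ V : f_i(v) = f(v)} and Y_i := V_i^* ∪ {v ∈ V ∖ V_i^* : f(V_i^* ∪ {v}) > f(V_i^*)}, and let 𝒞 be the family consisting of all sets V_i^* (i ∈ [k]), all sets Y_i (i ∈ [k]), and all sets V_i^* ∪ V_j^* ∪ {v} for distinct i, j ∈ [k] and v ∈ V. Then max_{X ⊆ V} f(X) ≤ (k − 1) · max_{C ∈ 𝒞} f(C). -/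
/-- For a `k`-XOS function `f` (`k ≥ 2`) with `f(v) > 0` for all `v`, cliques
`V_i^*`, sets `Y_i = V_i^* ∪ {v ∉ V_i^* | f(V_i^* ∪ {v}) > f(V_i^*)}`, and the family `𝒞` of
all `V_i^*`, all `Y_i`, and all `V_i^* ∪ V_j^* ∪ {v}` (`i ≠ j`, `v ∈ V`), we have
`max_{X ⊆ V} f(X) ≤ (k−1) · max_{C ∈ 𝒞} f(C)`. -/
theorem stmt10 {V : Type*} [Fintype V] [DecidableEq V] {k : ℕ} (hk : 2 ≤ k)
    (w : Fin k → V → ℝ) (f : Finset V → ℝ)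
    (hf : ∀ X : Finset V, IsGreatest (Set.range fun i : Fin k => ∑ v ∈ X, w i v) (f X))
    (hpos : ∀ v : V, 0 < f {v})
    (Vs Ys : Fin k → Finset V)
    (hVs : ∀ (i : Fin k) (v : V), v ∈ Vs i ↔ w i v = f {v})
    (hYs : ∀ (i : Fin k) (v : V),
      v ∈ Ys i ↔ v ∈ Vs i ∨ (v ∉ Vs i ∧ f (Vs i) < f (insert v (Vs i))))
    (𝒞 : Set (Finset V))
    (h𝒞 : 𝒞 = {C : Finset V | (∃ i : Fin k, C = Vs i) ∨ (∃ i : Fin k, C = Ys i) ∨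
      (∃ (i j : Fin k) (v : V), i ≠ j ∧ C = Vs i ∪ Vs j ∪ {v})}) :
    ∀ X : Finset V, f X ≤ ((k : ℝ) - 1) * sSup (f '' 𝒞) := by
  classical
  intro X
  -- basic consequences of hf
  have le_f : ∀ (S : Finset V) (j : Fin k), ∑ v ∈ S, w j v ≤ f S :=
    fun S j => (hf S).2 ⟨j, rfl⟩
  have ex_f : ∀ S : Finset V, ∃ j : Fin k, ∑ v ∈ S, w j v = f S := fun S => (hf S).1
  have fv_le : ∀ (j : Fin k) (v : V), w j v ≤ f {v} := by
    intro j v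
    have := le_f {v} j
    simpa using this
  have hc' : ∀ v : V, ∃ j, w j v = f {v} := by
    intro v
    obtain ⟨j, hj⟩ := ex_f {v}
    exact ⟨j, by simpa using hj⟩
  choose c hc using hc'
  have hcV : ∀ v, v ∈ Vs (c v) := fun v => (hVs (c v) v).2 (hc v)
  -- the maximum over the family
  set M := sSup (f '' 𝒞) with hMdef
  have hbdd : BddAbove (f '' 𝒞) := ((Set.toFinite 𝒞).image f).bddAbove
  have hM : ∀ C ∈ 𝒞, f C ≤ M := fun C hC => le_csSup hbdd ⟨C, hC, rfl⟩
  have hVsC : ∀ j, Vs j ∈ 𝒞 := by intro j; rw [h𝒞]; exact Or.inl ⟨j, rfl⟩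
  have hYsC : ∀ j, Ys j ∈ 𝒞 := by intro j; rw [h𝒞]; exact Or.inr (Or.inl ⟨j, rfl⟩)
  have hTC : ∀ (a b : Fin k) (v : V), a ≠ b → Vs a ∪ Vs b ∪ {v} ∈ 𝒞 := by
    intro a b v hab; rw [h𝒞]; exact Or.inr (Or.inr ⟨a, b, v, hab, rfl⟩)
  -- index achieving f X
  obtain ⟨i, hiX⟩ := ex_f X
  -- weight of cliques
  have hwV : ∀ (j : Fin k) (v : V), v ∈ Vs j → w j v = f {v} := fun j v h => (hVs j v).1 h
  have WleM : ∀ j : Fin k, ∑ v ∈ Vs j, w j v ≤ M :=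
    fun j => (le_f (Vs j) j).trans (hM _ (hVsC j))
  have Wnn : ∀ j : Fin k, (0:ℝ) ≤ ∑ v ∈ Vs j, w j v := by
    intro j
    refine Finset.sum_nonneg fun v hv => ?_
    rw [hwV j v hv]
    exact (hpos v).le
  have hMnn : (0:ℝ) ≤ M := (Wnn i).trans (WleM i)
  set Wi := ∑ v ∈ Vs i, w i v with hWi
  set P := (X.filter (fun v => v ∉ Vs i)).filter (fun v => 0 < w i v) with hP
  set B := fun j : Fin k => P.filter (fun v => c v = j) with hB
  have hBmem : ∀ (j : Fin k) (v : V), v ∈ B j →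
      v ∈ Vs j ∧ v ∉ Vs i ∧ 0 < w i v := by
    intro j v hv
    rw [hB, Finset.mem_filter] at hv
    obtain ⟨hvP, hcvj⟩ := hv
    rw [hP, Finset.mem_filter, Finset.mem_filter] at hvP
    exact ⟨hcvj ▸ hcV v, hvP.1.2, hvP.2⟩
  -- each B j has small w i mass
  have TleM : ∀ j : Fin k, ∑ v ∈ B j, w i v ≤ M := by
    intro j
    have h1 : ∑ v ∈ B j, w i v ≤ ∑ v ∈ B j, w j v := by
      refine Finset.sum_le_sum fun v hv => ?_
      rw [hwV j v (hBmem j v hv).1]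
      exact fv_le i v
    have h2 : ∑ v ∈ B j, w j v ≤ ∑ v ∈ Vs j, w j v := by
      refine Finset.sum_le_sum_of_subset_of_nonneg
        (fun v hv => (hBmem j v hv).1) (fun v hv _ => ?_)
      rw [hwV j v hv]; exact (hpos v).le
    exact h1.trans (h2.trans (WleM j))
  -- Step 1 : f X ≤ Wi + ∑_{j ≠ i} ∑_{v ∈ B j} w i v
  have step1 : f X ≤ Wi + ∑ j ∈ Finset.univ.erase i, ∑ v ∈ B j, w i v := by
    have hsplit1 : ∑ v ∈ X, w i v
        = ∑ v ∈ X.filter (fun v => v ∈ Vs i), w i v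
          + ∑ v ∈ X.filter (fun v => v ∉ Vs i), w i v := by
      exact (Finset.sum_filter_add_sum_filter_not X (fun v => v ∈ Vs i) _).symm
    have h1 : ∑ v ∈ X.filter (fun v => v ∈ Vs i), w i v ≤ Wi := by
      refine Finset.sum_le_sum_of_subset_of_nonneg
        (fun v hv => (Finset.mem_filter.mp hv).2) (fun v hv _ => ?_)
      rw [hwV i v hv]; exact (hpos v).le
    have h2 : ∑ v ∈ X.filter (fun v => v ∉ Vs i), w i v ≤ ∑ v ∈ P, w i v := by
      have hh := (Finset.sum_filter_add_sum_filter_not (X.filter (fun v => v ∉ Vs i))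
        (fun v => 0 < w i v) (fun v => w i v))
      have hneg : ∑ v ∈ (X.filter (fun v => v ∉ Vs i)).filter (fun v => ¬ 0 < w i v),
          w i v ≤ 0 := by
        refine Finset.sum_nonpos fun v hv => ?_
        exact not_lt.mp (Finset.mem_filter.mp hv).2
      rw [hP]
      linarith
    have h3 : ∑ v ∈ P, w i v = ∑ j : Fin k, ∑ v ∈ B j, w i v := by
      rw [hB]
      exact (Finset.sum_fiberwise P c (fun v => w i v)).symm
    have hBi : B i = ∅ := by
      rw [Finset.eq_empty_iff_forall_notMem]
      intro v hv
      obtain ⟨hv1, hv2, _⟩ := hBmem i v hv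
      exact hv2 hv1
    have h4 : ∑ j : Fin k, ∑ v ∈ B j, w i v
        = ∑ j ∈ Finset.univ.erase i, ∑ v ∈ B j, w i v := by
      symm
      apply Finset.sum_subset (Finset.erase_subset i Finset.univ)
      intro j _ hj
      have hji : j = i := by
        by_contra hne
        exact hj (Finset.mem_erase.mpr ⟨hne, Finset.mem_univ _⟩)
      rw [hji, hBi]
      simp
    calc f X = ∑ v ∈ X, w i v := hiX.symm
      _ = _ := hsplit1
      _ ≤ Wi + ∑ v ∈ P, w i v := by linarith
      _ = Wi + ∑ j ∈ Finset.univ.erase i, ∑ v ∈ B j, w i v := by rw [h3, h4]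
  -- Key claim: some j ≠ i can be merged with i within one member of the family
  have key : ∃ j : Fin k, j ≠ i ∧ Wi + ∑ v ∈ B j, w i v ≤ M := by
    obtain ⟨m, hm⟩ := ex_f (Vs i)
    rcases lt_or_ge Wi (f (Vs i)) with hcase | hcase
    · -- Case 1 : f (Vs i) > Wi ; use the triple (Vs i ∪ Vs m ∪ {v₀})
      have hmne : m ≠ i := by
        rintro rfl
        rw [hWi, hm] at hcase
        exact lt_irrefl _ hcase
      have hVne : (Vs i).Nonempty := by
        rcases Finset.eq_empty_or_nonempty (Vs i) with h | h
        · exfalso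
          rw [hWi, h] at hcase
          rw [h] at hm
          simp only [Finset.sum_empty] at hm hcase
          rw [← hm] at hcase
          exact lt_irrefl _ hcase
        · exact h
      obtain ⟨v₀, hv₀⟩ := hVne
      refine ⟨m, hmne, ?_⟩
      set C := Vs i ∪ Vs m ∪ {v₀} with hC
      have hCmem : C ∈ 𝒞 := hTC i m v₀ (Ne.symm hmne)
      have hsub : Vs i ⊆ C := by
        intro v hv
        rw [hC]
        simp [Finset.mem_union, hv]
      have hVmC : Vs m ⊆ C := by
        intro v hv
        rw [hC]
        simp [Finset.mem_union, hv]
      have hsum : ∑ v ∈ C \ Vs i, w m v + ∑ v ∈ Vs i, w m v = ∑ v ∈ C, w m v :=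
        Finset.sum_sdiff hsub
      have hBsub : B m ⊆ C \ Vs i := fun v hv =>
        Finset.mem_sdiff.mpr ⟨hVmC (hBmem m v hv).1, (hBmem m v hv).2.1⟩
      have hnn : ∀ v ∈ C \ Vs i, 0 ≤ w m v := by
        intro v hv
        rw [Finset.mem_sdiff] at hv
        have hvC := hv.1
        rw [hC] at hvC
        simp only [Finset.mem_union, Finset.mem_singleton] at hvC
        rcases hvC with (hvi | hvm) | hveq
        · exact absurd hvi hv.2
        · rw [hwV m v hvm]; exact (hpos v).le
        · exact absurd (hveq ▸ hv₀) hv.2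
      have h5 : ∑ v ∈ B m, w m v ≤ ∑ v ∈ C \ Vs i, w m v :=
        Finset.sum_le_sum_of_subset_of_nonneg hBsub (fun v hv _ => hnn v hv)
      have h6 : ∑ v ∈ B m, w i v ≤ ∑ v ∈ B m, w m v := by
        refine Finset.sum_le_sum fun v hv => ?_
        rw [hwV m v (hBmem m v hv).1]
        exact fv_le i v
      have h7 : ∑ v ∈ C, w m v ≤ f C := le_f C m
      have h8 : f C ≤ M := hM C hCmem
      linarith [hm]
    · -- Case 2 : f (Vs i) = Wi
      have hfW : f (Vs i) = Wi := le_antisymm hcase (le_f (Vs i) i)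
      by_cases hall : ∀ u ∈ Ys i, u ∉ Vs i → 0 < w i u
      · -- Case 2a : all of Ys i \ Vs i has positive w i ; use Ys i
        obtain ⟨j, hjmem, hjne⟩ := Finset.exists_mem_ne
          (show 1 < (Finset.univ : Finset (Fin k)).card by
            simp only [Finset.card_univ, Fintype.card_fin]; omega) i
        refine ⟨j, hjne, ?_⟩
        have hVsubY : Vs i ⊆ Ys i := fun v hv => (hYs i v).2 (Or.inl hv)
        have hsumY : ∑ v ∈ Ys i \ Vs i, w i v + ∑ v ∈ Vs i, w i v = ∑ v ∈ Ys i, w i v :=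
          Finset.sum_sdiff hVsubY
        have hBsubY : B j ⊆ Ys i \ Vs i := by
          intro v hv
          obtain ⟨_, h2, h3⟩ := hBmem j v hv
          rw [Finset.mem_sdiff]
          refine ⟨(hYs i v).2 (Or.inr ⟨h2, ?_⟩), h2⟩
          have hle := le_f (insert v (Vs i)) i
          rw [Finset.sum_insert h2] at hle
          rw [hfW]
          linarith
        have h5 : ∑ v ∈ B j, w i v ≤ ∑ v ∈ Ys i \ Vs i, w i v := by
          refine Finset.sum_le_sum_of_subset_of_nonneg hBsubY (fun v hv _ => ?_)
          rw [Finset.mem_sdiff] at hv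
          exact (hall v hv.1 hv.2).le
        have h6 : ∑ v ∈ Ys i, w i v ≤ f (Ys i) := le_f (Ys i) i
        have h7 : f (Ys i) ≤ M := hM _ (hYsC i)
        linarith
      · -- Case 2b : some u ∈ Ys i \ Vs i with w i u ≤ 0 ; use triple (Vs i ∪ Vs m2 ∪ {u})
        push_neg at hall
        obtain ⟨u, huY, huV, hu0⟩ := hall
        have hlt : f (Vs i) < f (insert u (Vs i)) :=
          (((hYs i u).1 huY).resolve_left huV).2
        obtain ⟨m2, hm2⟩ := ex_f (insert u (Vs i))
        have hsumIns : ∑ v ∈ insert u (Vs i), w m2 v = w m2 u + ∑ v ∈ Vs i, w m2 v :=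
          Finset.sum_insert huV
        have hm2ne : m2 ≠ i := by
          rintro rfl
          rw [hsumIns] at hm2
          rw [hfW] at hlt
          linarith
        refine ⟨m2, hm2ne, ?_⟩
        set C := Vs i ∪ Vs m2 ∪ {u} with hC
        have hCmem : C ∈ 𝒞 := hTC i m2 u (Ne.symm hm2ne)
        set S := insert u (Vs i) with hS
        have hSsub : S ⊆ C := by
          intro v hv
          rw [hS, Finset.mem_insert] at hv
          rw [hC]
          simp only [Finset.mem_union, Finset.mem_singleton]
          rcases hv with h | h
          · exact Or.inr h
          · exact Or.inl (Or.inl h)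
        have hVm2C : Vs m2 ⊆ C := by
          intro v hv
          rw [hC]
          simp [Finset.mem_union, hv]
        have hsum2 : ∑ v ∈ C \ S, w m2 v + ∑ v ∈ S, w m2 v = ∑ v ∈ C, w m2 v :=
          Finset.sum_sdiff hSsub
        have hBsub2 : B m2 ⊆ C \ S := by
          intro v hv
          obtain ⟨h1, h2, h3⟩ := hBmem m2 v hv
          rw [Finset.mem_sdiff]
          refine ⟨hVm2C h1, ?_⟩
          rw [hS, Finset.mem_insert]
          rintro (rfl | hvi)
          · linarith
          · exact h2 hvi
        have hnn2 : ∀ v ∈ C \ S, 0 ≤ w m2 v := by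
          intro v hv
          rw [Finset.mem_sdiff] at hv
          have hvC := hv.1
          have hvS := hv.2
          rw [hS, Finset.mem_insert] at hvS
          push_neg at hvS
          rw [hC] at hvC
          simp only [Finset.mem_union, Finset.mem_singleton] at hvC
          rcases hvC with (hvi | hvm) | hveq
          · exact absurd hvi hvS.2
          · rw [hwV m2 v hvm]; exact (hpos v).le
          · exact absurd hveq hvS.1
        have h5 : ∑ v ∈ B m2, w m2 v ≤ ∑ v ∈ C \ S, w m2 v :=
          Finset.sum_le_sum_of_subset_of_nonneg hBsub2 (fun v hv _ => hnn2 v hv)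
        have h6 : ∑ v ∈ B m2, w i v ≤ ∑ v ∈ B m2, w m2 v := by
          refine Finset.sum_le_sum fun v hv => ?_
          rw [hwV m2 v (hBmem m2 v hv).1]
          exact fv_le i v
        have h7 : ∑ v ∈ C, w m2 v ≤ f C := le_f C m2
        have h8 : f C ≤ M := hM C hCmem
        rw [hfW] at hlt
        linarith [hm2]
  -- Final assembly
  obtain ⟨j₀, hj₀ne, hj₀⟩ := key
  have hj₀mem : j₀ ∈ Finset.univ.erase i :=
    Finset.mem_erase.mpr ⟨hj₀ne, Finset.mem_univ _⟩
  have hsplit : ∑ j ∈ Finset.univ.erase i, ∑ v ∈ B j, w i v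
      = (∑ v ∈ B j₀, w i v) + ∑ j ∈ (Finset.univ.erase i).erase j₀, ∑ v ∈ B j, w i v :=
    (Finset.add_sum_erase _ _ hj₀mem).symm
  have hcard : ((Finset.univ.erase i).erase j₀).card = k - 2 := by
    rw [Finset.card_erase_of_mem hj₀mem, Finset.card_erase_of_mem (Finset.mem_univ i)]
    simp only [Finset.card_univ, Fintype.card_fin]
    omega
  have hrest : ∑ j ∈ (Finset.univ.erase i).erase j₀, ∑ v ∈ B j, w i v
      ≤ ((k - 2 : ℕ) : ℝ) * M := by
    have := Finset.sum_le_card_nsmul ((Finset.univ.erase i).erase j₀)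
      (fun j => ∑ v ∈ B j, w i v) M (fun j _ => TleM j)
    rw [hcard] at this
    simpa [nsmul_eq_mul] using this
  have hcast : ((k - 2 : ℕ) : ℝ) = (k : ℝ) - 2 := by
    push_cast [Nat.cast_sub hk]
    ring
  rw [hcast] at hrest
  have : f X ≤ M + ((k : ℝ) - 2) * M := by
    rw [hsplit] at step1
    linarith
  have hring : ((k : ℝ) - 1) * M = M + ((k : ℝ) - 2) * M := by ring
  linarith [this, hring]
end

section
/- Let f be a k-XOS function on a finite set V with representation (f_1, …, f_k), with f(v) > 0 for all v ∈ V, and satisfying the condition (*): for every v ∈ V and every i ∈ [k], either f_i(v) = f(v) or f_i(v) ≤ 0. Then there exists i ∈ [k] such that the clique V_i^* := {v ∈ V : f_i(v) = f(v)} is a maximizer of f (i.e., f(V_i^*) = max_{X ⊆ V} f(X)) and V_i^* is inclusion-wise maximal among the cliques, i.e., there is no j ∈ [k] with V_i^* ⊊ V_j^*. -/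
/-- For a `k`-XOS function `f` with `f(v) > 0` for all `v` satisfying the
condition (*) (for every `v` and `i`, either `f_i(v) = f(v)` or `f_i(v) ≤ 0`), some clique
`V_i^* = {v | f_i(v) = f(v)}` is a maximizer of `f` and is inclusion-wise maximal among the
cliques. -/
theorem stmt11 {V : Type*} [Fintype V] {k : ℕ}
    (w : Fin k → V → ℝ) (f : Finset V → ℝ)
    (hf : ∀ X : Finset V, IsGreatest (Set.range fun i : Fin k => ∑ v ∈ X, w i v) (f X))
    (hpos : ∀ v : V, 0 < f {v})
    (hstar : ∀ (v : V) (i : Fin k), w i v = f {v} ∨ w i v ≤ 0)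
    (Vs : Fin k → Finset V)
    (hVs : ∀ (i : Fin k) (v : V), v ∈ Vs i ↔ w i v = f {v}) :
    ∃ i : Fin k, (∀ X : Finset V, f X ≤ f (Vs i)) ∧ ∀ j : Fin k, ¬ Vs i ⊂ Vs j := by
  classical
  -- k is positive
  obtain ⟨i₁, -⟩ := (hf ∅).1
  set g : Fin k → ℝ := fun i => ∑ v ∈ Vs i, f {v} with hg
  obtain ⟨i₀, -, hmax⟩ := Finset.exists_max_image Finset.univ g ⟨i₁, Finset.mem_univ _⟩
  -- Key lemma A: sums are bounded by g
  have hA : ∀ (j : Fin k) (X : Finset V), ∑ v ∈ X, w j v ≤ g j := by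
    intro j X
    have h1 : ∑ v ∈ X, w j v ≤ ∑ v ∈ X, (if v ∈ Vs j then f {v} else 0) := by
      apply Finset.sum_le_sum
      intro v _
      rcases hstar v j with h | h
      · simp [(hVs j v).2 h, h]
      · split
        · exact h.trans (le_of_lt (hpos v))
        · exact h
    have h2 : ∑ v ∈ X, (if v ∈ Vs j then f {v} else 0) = ∑ v ∈ X ∩ Vs j, f {v} :=
      Finset.sum_ite_mem X (Vs j) _
    have h3 : ∑ v ∈ X ∩ Vs j, f {v} ≤ g j := by
      apply Finset.sum_le_sum_of_subset_of_nonneg Finset.inter_subset_right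
      intro v _ _
      exact le_of_lt (hpos v)
    linarith
  -- Key lemma B: g j ≤ f (Vs j)
  have hB : ∀ j : Fin k, g j ≤ f (Vs j) := by
    intro j
    have h1 : ∑ v ∈ Vs j, w j v = g j := by
      apply Finset.sum_congr rfl
      intro v hv
      exact (hVs j v).1 hv
    have h2 := (hf (Vs j)).2 ⟨j, rfl⟩
    simpa [h1] using h2
  refine ⟨i₀, ?_, ?_⟩
  · intro X
    obtain ⟨j, hj⟩ := (hf X).1
    calc f X = ∑ v ∈ X, w j v := hj.symm
      _ ≤ g j := hA j X
      _ ≤ g i₀ := hmax j (Finset.mem_univ _)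
      _ ≤ f (Vs i₀) := hB i₀
  · intro j hsub
    obtain ⟨v, hvj, hvi⟩ := Finset.exists_of_ssubset hsub
    have : g i₀ < g j := by
      apply Finset.sum_lt_sum_of_subset hsub.subset hvj hvi (hpos v)
      intro v' _ _
      exact le_of_lt (hpos v')
    exact absurd (hmax j (Finset.mem_univ _)) (not_le.mpr this)
end

section
/- Let k ≥ 3 be an integer, let ñ be a positive integer, and let γ be a rational number with 0 < γ < 1 such that γñ is an integer. Let V be the disjoint union of sets V_1, …, V_{k−1} with |V_i| = ñ^i, and for each i ∈ [k−1] let S_i ⊆ V_i with |S_i| = (1 − γ)ñ^i. Define additive functions on V by: f_i(v) = ñ^{k−i} if v ∈ V_i and f_i(v) = 0 otherwise, for i ∈ [k−1]; and f_k(v) = (1 − γ)ñ^{k−i} if v ∈ S_i for some i ∈ [k−1], and f_k(v) = −ñ^{k+1} otherwise. Let f(X) = max_{i ∈ [k]} f_i(X). Then for every nonempty X ⊆ V with f(X) = f_k(X), there exists i ∈ {2, 3, …, k−1} such that X ∩ V_i ⊆ S_i and |X ∩ V_i| ≥ γñ/(k−2). -/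
/-!
Write `g i = ∑ v ∈ X ∩ V_i, f_k(v)`, so that `f_k(X) = ∑ i, g i`. Every vertex of `V_i` has
`f_k`-weight at most `(1 - γ) ñ^(k-i)`, and a block meeting `V_i \ S_i` has `g i ≤ 0`, since one
penalty `ñ^(k+1)` outweighs all of `S_i`. If the conclusion failed, every block `i ≥ 2` would
therefore have `g i ≤ γñ/(k-2) · (1 - γ) ñ^(k-i)`. Let `i₀` be the first block meeting `X` and
`a = |X ∩ V_{i₀}| ≥ 1`; the blocks after `i₀` contribute at most `γ (1 - γ) ñ^(k-i₀)`, so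
`a ñ^(k-i₀) = f_{i₀}(X) ≤ f_k(X) ≤ (a + γ)(1 - γ) ñ^(k-i₀)`, which forces `a ≤ 1 - γ < 1`.
-/

open Finset

theorem Finset.sum_eq_sum_sum_inter {ι V M : Type*} [DecidableEq V] [AddCommMonoid M]
    {I : Finset ι} {Vs : ι → Finset V} {X : Finset V} (hdisj : (I : Set ι).PairwiseDisjoint Vs)
    (hcover : ∀ v ∈ X, ∃ i ∈ I, v ∈ Vs i) (φ : V → M) :
    ∑ v ∈ X, φ v = ∑ i ∈ I, ∑ v ∈ X ∩ Vs i, φ v := by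
  have hX : X = I.biUnion fun i => X ∩ Vs i := by
    rw [← inter_biUnion, eq_comm, inter_eq_left]
    intro v hv
    simpa only [mem_biUnion] using hcover v hv
  rw [← sum_biUnion (hdisj.mono fun i => inter_subset_right), ← hX]

theorem Finset.sum_nonpos_of_not_subset {V : Type*} [DecidableEq V] {s S : Finset V}
    {φ : V → ℝ} {p P : ℝ} (hp : 0 ≤ p) (hSP : #S * p ≤ P)
    (hin : ∀ v ∈ s ∩ S, φ v = p) (hout : ∀ v ∈ s \ S, φ v = -P) (hsS : ¬ s ⊆ S) :
    ∑ v ∈ s, φ v ≤ 0 := by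
  obtain ⟨v, hvs, hvS⟩ := not_subset.mp hsS
  have hin_card : (#(s ∩ S) : ℝ) ≤ #S := by exact_mod_cast card_le_card inter_subset_right
  have hout_card : (1 : ℝ) ≤ #(s \ S) := by
    exact_mod_cast card_pos.mpr ⟨v, mem_sdiff.mpr ⟨hvs, hvS⟩⟩
  rw [← sum_inter_add_sum_sdiff s S φ, sum_congr rfl hin, sum_congr rfl hout, sum_const,
    sum_const, nsmul_eq_mul, nsmul_eq_mul]
  have hP : 0 ≤ P := (mul_nonneg (Nat.cast_nonneg _) hp).trans hSP
  nlinarith [mul_le_mul_of_nonneg_right hin_card hp, mul_le_mul_of_nonneg_right hout_card hP]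

theorem Finset.exists_least_index_of_cover {V : Type*} [DecidableEq V] {X : Finset V}
    {Vs : ℕ → Finset V} {l m : ℕ} (hX : X.Nonempty) (hcover : ∀ v ∈ X, ∃ i ∈ Icc l m, v ∈ Vs i) :
    ∃ i₀ ∈ Icc l m, (X ∩ Vs i₀).Nonempty ∧ ∀ v ∈ X, ∃ i ∈ Icc i₀ m, v ∈ Vs i := by
  set N := (Icc l m).filter fun i => (X ∩ Vs i).Nonempty
  have hN : ∀ v ∈ X, ∃ i ∈ N, v ∈ Vs i := fun v hv => by
    obtain ⟨i, hi, hvi⟩ := hcover v hv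
    exact ⟨i, mem_filter.mpr ⟨hi, v, mem_inter.mpr ⟨hv, hvi⟩⟩, hvi⟩
  obtain ⟨v, hv⟩ := hX
  obtain ⟨i₀, hi₀, hmin⟩ := N.exists_min_image id (let ⟨i, hi, _⟩ := hN v hv; ⟨i, hi⟩)
  refine ⟨i₀, (mem_filter.mp hi₀).1, (mem_filter.mp hi₀).2, fun u hu => ?_⟩
  obtain ⟨i, hi, hui⟩ := hN u hu
  exact ⟨i, mem_Icc.mpr ⟨hmin i hi, (mem_Icc.mp (mem_filter.mp hi).1).2⟩, hui⟩

theorem Set.PairwiseDisjoint.notMem_of_subset {ι V : Type*} {I : Set ι} {Vs Ss : ι → Finset V}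
    (hdisj : I.PairwiseDisjoint Vs) (hsub : ∀ j ∈ I, Ss j ⊆ Vs j) {i j : ι} (hi : i ∈ I)
    (hj : j ∈ I) {v : V} (hv : v ∈ Vs i) (hvS : v ∉ Ss i) : v ∉ Ss j := by
  by_cases hij : i = j
  · exact hij ▸ hvS
  · exact fun hvj => Finset.disjoint_left.mp (hdisj hi hj hij :) hv (hsub j hj hvj)

section HardInstance

variable {V : Type*} [DecidableEq V] {k nt : ℕ} {γ : ℝ} {Vs Ss : ℕ → Finset V} {w : ℕ → V → ℝ}

theorem sum_weight_eq_card_mul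
    (hw : ∀ i ∈ Icc 1 (k - 1), ∀ v : V, w i v = if v ∈ Vs i then (nt : ℝ) ^ (k - i) else 0)
    {i : ℕ} (hi : i ∈ Icc 1 (k - 1)) (X : Finset V) :
    ∑ v ∈ X, w i v = #(X ∩ Vs i) * (nt : ℝ) ^ (k - i) := by
  rw [sum_congr rfl fun v _ => hw i hi v, sum_ite_mem, sum_const, nsmul_eq_mul]

theorem weight_le_of_mem (hdisj : (↑(Icc 1 (k - 1)) : Set ℕ).PairwiseDisjoint Vs)
    (hS : ∀ i ∈ Icc 1 (k - 1), Ss i ⊆ Vs i) (hγ1 : γ ≤ 1)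
    (hwk1 : ∀ i ∈ Icc 1 (k - 1), ∀ v ∈ Ss i, w k v = (1 - γ) * (nt : ℝ) ^ (k - i))
    (hwk2 : ∀ v : V, (∀ i ∈ Icc 1 (k - 1), v ∉ Ss i) → w k v = -(nt : ℝ) ^ (k + 1))
    {i : ℕ} (hi : i ∈ Icc 1 (k - 1)) {v : V} (hv : v ∈ Vs i) :
    w k v ≤ (1 - γ) * (nt : ℝ) ^ (k - i) := by
  by_cases hvS : v ∈ Ss i
  · exact (hwk1 i hi v hvS).le
  · rw [hwk2 v fun j hj => hdisj.notMem_of_subset hS hi hj hv hvS]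
    have : 0 ≤ 1 - γ := by linarith
    exact (neg_nonpos.mpr (by positivity)).trans (by positivity)

theorem blockSum_le (hdisj : (↑(Icc 1 (k - 1)) : Set ℕ).PairwiseDisjoint Vs)
    (hS : ∀ i ∈ Icc 1 (k - 1), Ss i ⊆ Vs i) (hγ1 : γ ≤ 1)
    (hwk1 : ∀ i ∈ Icc 1 (k - 1), ∀ v ∈ Ss i, w k v = (1 - γ) * (nt : ℝ) ^ (k - i))
    (hwk2 : ∀ v : V, (∀ i ∈ Icc 1 (k - 1), v ∉ Ss i) → w k v = -(nt : ℝ) ^ (k + 1))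
    {i : ℕ} (hi : i ∈ Icc 1 (k - 1)) (X : Finset V) :
    ∑ v ∈ X ∩ Vs i, w k v ≤ #(X ∩ Vs i) * ((1 - γ) * (nt : ℝ) ^ (k - i)) := by
  rw [← nsmul_eq_mul]
  exact sum_le_card_nsmul _ _ _ fun v hv =>
    weight_le_of_mem hdisj hS hγ1 hwk1 hwk2 hi (mem_inter.mp hv).2

theorem blockSum_nonpos_of_not_subset (hdisj : (↑(Icc 1 (k - 1)) : Set ℕ).PairwiseDisjoint Vs)
    (hS : ∀ i ∈ Icc 1 (k - 1), Ss i ⊆ Vs i ∧ (#(Ss i) : ℝ) = (1 - γ) * (nt : ℝ) ^ i)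
    (hnt : 1 ≤ nt) (hγ0 : 0 ≤ γ) (hγ1 : γ ≤ 1)
    (hwk1 : ∀ i ∈ Icc 1 (k - 1), ∀ v ∈ Ss i, w k v = (1 - γ) * (nt : ℝ) ^ (k - i))
    (hwk2 : ∀ v : V, (∀ i ∈ Icc 1 (k - 1), v ∉ Ss i) → w k v = -(nt : ℝ) ^ (k + 1))
    {i : ℕ} (hi : i ∈ Icc 1 (k - 1)) {X : Finset V} (hbad : ¬ X ∩ Vs i ⊆ Ss i) :
    ∑ v ∈ X ∩ Vs i, w k v ≤ 0 := by
  have hn : (1 : ℝ) ≤ nt := by exact_mod_cast hnt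
  have hγ : 0 ≤ 1 - γ := by linarith
  have hSP : #(Ss i) * ((1 - γ) * (nt : ℝ) ^ (k - i)) ≤ (nt : ℝ) ^ (k + 1) := calc
    _ = (1 - γ) ^ 2 * ((nt : ℝ) ^ i * (nt : ℝ) ^ (k - i)) := by rw [(hS i hi).2]; ring
    _ = (1 - γ) ^ 2 * (nt : ℝ) ^ k := by rw [pow_mul_pow_sub _ ((mem_Icc.mp hi).2.trans (Nat.sub_le k 1))]
    _ ≤ 1 * (nt : ℝ) ^ (k + 1) := by
      gcongr
      · nlinarith
      · omega
    _ = _ := one_mul _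
  exact sum_nonpos_of_not_subset (by positivity) hSP
    (fun v hv => hwk1 i hi v (mem_inter.mp hv).2)
    (fun v hv => hwk2 v fun j hj => hdisj.notMem_of_subset (fun j hj => (hS j hj).1) hi hj
      (mem_inter.mp (mem_sdiff.mp hv).1).2 (mem_sdiff.mp hv).2) hbad

theorem blockSum_le_of_small (hdisj : (↑(Icc 1 (k - 1)) : Set ℕ).PairwiseDisjoint Vs)
    (hS : ∀ i ∈ Icc 1 (k - 1), Ss i ⊆ Vs i ∧ (#(Ss i) : ℝ) = (1 - γ) * (nt : ℝ) ^ i)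
    (hnt : 1 ≤ nt) (hγ0 : 0 ≤ γ) (hγ1 : γ ≤ 1)
    (hwk1 : ∀ i ∈ Icc 1 (k - 1), ∀ v ∈ Ss i, w k v = (1 - γ) * (nt : ℝ) ^ (k - i))
    (hwk2 : ∀ v : V, (∀ i ∈ Icc 1 (k - 1), v ∉ Ss i) → w k v = -(nt : ℝ) ^ (k + 1))
    {i : ℕ} (hi : i ∈ Icc 1 (k - 1)) {X : Finset V} {c : ℝ} (hc : 0 ≤ c)
    (hsmall : X ∩ Vs i ⊆ Ss i → (#(X ∩ Vs i) : ℝ) < c) :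
    ∑ v ∈ X ∩ Vs i, w k v ≤ c * ((1 - γ) * (nt : ℝ) ^ (k - i)) := by
  have hp : 0 ≤ (1 - γ) * (nt : ℝ) ^ (k - i) := mul_nonneg (by linarith) (by positivity)
  by_cases hclean : X ∩ Vs i ⊆ Ss i
  · exact (blockSum_le hdisj (fun j hj => (hS j hj).1) hγ1 hwk1 hwk2 hi X).trans
      (mul_le_mul_of_nonneg_right (hsmall hclean).le hp)
  · exact (blockSum_nonpos_of_not_subset hdisj hS hnt hγ0 hγ1 hwk1 hwk2 hi hclean).trans
      (mul_nonneg hc hp)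

theorem sum_Ioc_blockSum_le (hk : 3 ≤ k) (hdisj : (↑(Icc 1 (k - 1)) : Set ℕ).PairwiseDisjoint Vs)
    (hS : ∀ i ∈ Icc 1 (k - 1), Ss i ⊆ Vs i ∧ (#(Ss i) : ℝ) = (1 - γ) * (nt : ℝ) ^ i)
    (hnt : 1 ≤ nt) (hγ0 : 0 ≤ γ) (hγ1 : γ ≤ 1)
    (hwk1 : ∀ i ∈ Icc 1 (k - 1), ∀ v ∈ Ss i, w k v = (1 - γ) * (nt : ℝ) ^ (k - i))
    (hwk2 : ∀ v : V, (∀ i ∈ Icc 1 (k - 1), v ∉ Ss i) → w k v = -(nt : ℝ) ^ (k + 1))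
    {X : Finset V} (hsmall : ∀ i, 2 ≤ i → i ≤ k - 1 → X ∩ Vs i ⊆ Ss i →
      (#(X ∩ Vs i) : ℝ) < γ * nt / ((k : ℝ) - 2))
    {i₀ : ℕ} (hi₀ : i₀ ∈ Icc 1 (k - 1)) :
    ∑ i ∈ Ioc i₀ (k - 1), ∑ v ∈ X ∩ Vs i, w k v ≤ γ * ((1 - γ) * (nt : ℝ) ^ (k - i₀)) := by
  have hk₂ : (0 : ℝ) < k - 2 := by
    have : (3 : ℝ) ≤ k := by exact_mod_cast hk
    linarith
  have hn : (1 : ℝ) ≤ nt := by exact_mod_cast hnt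
  have hγ : 0 ≤ 1 - γ := by linarith
  have hi₀' := mem_Icc.mp hi₀
  set c := γ * nt / ((k : ℝ) - 2)
  have hc : 0 ≤ c := div_nonneg (by positivity) hk₂.le
  calc ∑ i ∈ Ioc i₀ (k - 1), ∑ v ∈ X ∩ Vs i, w k v
      ≤ #(Ioc i₀ (k - 1)) • (c * ((1 - γ) * (nt : ℝ) ^ (k - i₀ - 1))) := by
        refine sum_le_card_nsmul _ _ _ fun i hi => ?_
        have hi' := mem_Ioc.mp hi
        refine (blockSum_le_of_small hdisj hS hnt hγ0 hγ1 hwk1 hwk2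
          (mem_Icc.mpr ⟨by omega, hi'.2⟩) hc (hsmall i (by omega) hi'.2)).trans ?_
        gcongr _ * (_ * ?_)
        exact pow_le_pow_right₀ hn (by omega)
    _ ≤ ((k : ℝ) - 2) * (c * ((1 - γ) * (nt : ℝ) ^ (k - i₀ - 1))) := by
        rw [nsmul_eq_mul, Nat.card_Ioc]
        gcongr
        have : ((k - 1 - i₀ : ℕ) : ℝ) + 2 ≤ k := by exact_mod_cast (by omega : k - 1 - i₀ + 2 ≤ k)
        linarith
    _ = γ * ((1 - γ) * (nt : ℝ) ^ (k - i₀)) := by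
        have hc₂ : ((k : ℝ) - 2) * c = γ * nt := mul_div_cancel₀ _ hk₂.ne'
        rw [← pow_sub_one_mul (by omega : k - i₀ ≠ 0)]
        linear_combination ((1 - γ) * (nt : ℝ) ^ (k - i₀ - 1)) * hc₂

end HardInstance

theorem stmt13_general {V : Type*} [DecidableEq V]
    {k : ℕ} (hk : 3 ≤ k) {nt : ℕ} (hnt : 1 ≤ nt)
    (γ : ℚ) (hγ0 : 0 < γ) (hγ1 : γ < 1)
    (Vs Ss : ℕ → Finset V)
    (hdisj : ∀ i ∈ Finset.Icc 1 (k - 1), ∀ j ∈ Finset.Icc 1 (k - 1),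
      i ≠ j → Disjoint (Vs i) (Vs j))
    (hcover : ∀ v : V, ∃ i ∈ Finset.Icc 1 (k - 1), v ∈ Vs i)
    (hS : ∀ i ∈ Finset.Icc 1 (k - 1),
      Ss i ⊆ Vs i ∧ ((Ss i).card : ℝ) = (1 - (γ : ℝ)) * (nt : ℝ) ^ i)
    (w : ℕ → V → ℝ)
    (hw : ∀ i ∈ Finset.Icc 1 (k - 1), ∀ v : V,
      w i v = if v ∈ Vs i then (nt : ℝ) ^ (k - i) else 0)
    (hwk1 : ∀ i ∈ Finset.Icc 1 (k - 1), ∀ v ∈ Ss i,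
      w k v = (1 - (γ : ℝ)) * (nt : ℝ) ^ (k - i))
    (hwk2 : ∀ v : V, (∀ i ∈ Finset.Icc 1 (k - 1), v ∉ Ss i) → w k v = -(nt : ℝ) ^ (k + 1))
    (f : Finset V → ℝ)
    (hf : ∀ X : Finset V,
      IsGreatest ((fun i : ℕ => ∑ v ∈ X, w i v) '' (Set.Icc 1 k)) (f X)) :
    ∀ X : Finset V, X.Nonempty → f X = ∑ v ∈ X, w k v →
      ∃ i : ℕ, 2 ≤ i ∧ i ≤ k - 1 ∧ X ∩ Vs i ⊆ Ss i ∧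
        (γ : ℝ) * (nt : ℝ) / ((k : ℝ) - 2) ≤ ((X ∩ Vs i).card : ℝ) := by
  intro X hX hfX
  by_contra! hsmall
  have hγ0' : (0 : ℝ) < γ := by exact_mod_cast hγ0
  have hγ1' : (γ : ℝ) < 1 := by exact_mod_cast hγ1
  have hdisj' : (↑(Icc 1 (k - 1)) : Set ℕ).PairwiseDisjoint Vs := fun i hi j hj => hdisj i hi j hj
  obtain ⟨i₀, hi₀, hne, hcover₀⟩ := exists_least_index_of_cover hX fun v _ => hcover v
  have hi₀' := mem_Icc.mp hi₀
  have hsplit : ∑ v ∈ X, w k v =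
      ∑ v ∈ X ∩ Vs i₀, w k v + ∑ i ∈ Ioc i₀ (k - 1), ∑ v ∈ X ∩ Vs i, w k v := by
    rw [sum_eq_sum_sum_inter (hdisj'.subset (coe_subset.mpr (Icc_subset_Icc_left hi₀'.1)))
      hcover₀, Icc_eq_cons_Ioc hi₀'.2, sum_cons]
  have hlead := blockSum_le hdisj' (fun i hi => (hS i hi).1) hγ1'.le hwk1 hwk2 hi₀ X
  have htail := sum_Ioc_blockSum_le hk hdisj' hS hnt hγ0'.le hγ1'.le hwk1 hwk2 hsmall hi₀
  have hfirst : #(X ∩ Vs i₀) * (nt : ℝ) ^ (k - i₀) ≤ ∑ v ∈ X, w k v := by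
    rw [← hfX, ← sum_weight_eq_card_mul hw hi₀]
    exact (hf X).2 ⟨i₀, ⟨hi₀'.1, by omega⟩, rfl⟩
  have ha : (1 : ℝ) ≤ #(X ∩ Vs i₀) := by exact_mod_cast hne.card_pos
  have hq : (0 : ℝ) < (nt : ℝ) ^ (k - i₀) := by positivity
  nlinarith [mul_pos (mul_pos hγ0' hq) (by linarith : (0 : ℝ) < #(X ∩ Vs i₀) - 1 + γ)]

/-- The hard instance for `k`-XOS maximization. `V` is the disjoint union of
`V_1, …, V_{k−1}` with `|V_i| = ñ^i`, `S_i ⊆ V_i` with `|S_i| = (1−γ)ñ^i`; the additive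
functions are `f_i(v) = ñ^{k−i}` on `V_i` and `0` elsewhere (`i ∈ [k−1]`), and
`f_k(v) = (1−γ)ñ^{k−i}` if `v ∈ S_i`, and `−ñ^{k+1}` otherwise; `f = max_i f_i`. Then every
nonempty `X` with `f(X) = f_k(X)` has some `i ∈ {2, …, k−1}` with `X ∩ V_i ⊆ S_i` and
`|X ∩ V_i| ≥ γñ/(k−2)`. -/
theorem stmt13 {V : Type*} [Fintype V] [DecidableEq V]
    {k : ℕ} (hk : 3 ≤ k) {nt : ℕ} (hnt : 1 ≤ nt)
    (γ : ℚ) (hγ0 : 0 < γ) (hγ1 : γ < 1) (hγint : ∃ z : ℤ, γ * (nt : ℚ) = (z : ℚ))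
    (Vs Ss : ℕ → Finset V)
    (hdisj : ∀ i ∈ Finset.Icc 1 (k - 1), ∀ j ∈ Finset.Icc 1 (k - 1),
      i ≠ j → Disjoint (Vs i) (Vs j))
    (hcover : ∀ v : V, ∃ i ∈ Finset.Icc 1 (k - 1), v ∈ Vs i)
    (hcard : ∀ i ∈ Finset.Icc 1 (k - 1), (Vs i).card = nt ^ i)
    (hS : ∀ i ∈ Finset.Icc 1 (k - 1),
      Ss i ⊆ Vs i ∧ ((Ss i).card : ℝ) = (1 - (γ : ℝ)) * (nt : ℝ) ^ i)
    (w : ℕ → V → ℝ)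
    (hw : ∀ i ∈ Finset.Icc 1 (k - 1), ∀ v : V,
      w i v = if v ∈ Vs i then (nt : ℝ) ^ (k - i) else 0)
    (hwk1 : ∀ i ∈ Finset.Icc 1 (k - 1), ∀ v ∈ Ss i,
      w k v = (1 - (γ : ℝ)) * (nt : ℝ) ^ (k - i))
    (hwk2 : ∀ v : V, (∀ i ∈ Finset.Icc 1 (k - 1), v ∉ Ss i) → w k v = -(nt : ℝ) ^ (k + 1))
    (f : Finset V → ℝ)
    (hf : ∀ X : Finset V,
      IsGreatest ((fun i : ℕ => ∑ v ∈ X, w i v) '' (Set.Icc 1 k)) (f X)) :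
    ∀ X : Finset V, X.Nonempty → f X = ∑ v ∈ X, w k v →
      ∃ i : ℕ, 2 ≤ i ∧ i ≤ k - 1 ∧ X ∩ Vs i ⊆ Ss i ∧
        (γ : ℝ) * (nt : ℝ) / ((k : ℝ) - 2) ≤ ((X ∩ Vs i).card : ℝ) :=
  stmt13_general hk hnt γ hγ0 hγ1 Vs Ss hdisj hcover hS w hw hwk1 hwk2 f hf
end

section
/- For every positive integer n, there exists a family of 2^{⌊n/2⌋ · ⌈n/2⌉} additive set functions on [n] that are pairwise order-different. In particular, the number of order-different additive (1-XOS) functions on a ground set of size n is 2^{Ω(n^2)}. -/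
private lemma geom_aux (i0 : ℕ) : ∀ k : ℕ, i0 < k →
    3 * (∑ i ∈ Finset.Ico (i0+1) k, 4^(k-i)) + 4 = 4^(k-i0) := by
  intro k
  induction k with
  | zero => omega
  | succ k ih =>
    intro h
    rcases Nat.lt_or_ge i0 k with hk | hk
    · rw [Finset.sum_Ico_succ_top (by omega)]
      have hshift : ∑ i ∈ Finset.Ico (i0+1) k, 4^(k+1-i)
          = 4 * ∑ i ∈ Finset.Ico (i0+1) k, 4^(k-i) := by
        rw [Finset.mul_sum]
        apply Finset.sum_congr rfl
        intro i hi
        simp only [Finset.mem_Ico] at hi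
        have h1 : k + 1 - i = (k - i) + 1 := by omega
        rw [h1, pow_succ]; ring
      have hks : k + 1 - i0 = (k - i0) + 1 := by omega
      have h2 : k + 1 - k = 1 := by omega
      rw [hshift, hks, pow_succ, h2]
      have := ih hk
      omega
    · have hik : i0 = k := by omega
      have h2 : k + 1 - k = 1 := by omega
      rw [hik, Finset.Ico_self, Finset.sum_empty, h2]
      norm_num

private lemma key (k i0 : ℕ) (hi0 : i0 < k) (c c' : ℕ → ℕ)
    (hc' : ∀ i, c' i ≤ 1) (hlt : ∀ i < i0, c' i = c i)
    (h1 : c i0 = 1) (h0 : c' i0 = 0) :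
    (∑ i ∈ Finset.range k, (if i < i0 then c i else if i = i0 then 1 else 0) * 4^(k-i)
       ≤ ∑ i ∈ Finset.range k, c i * 4^(k-i)) ∧
    (∑ i ∈ Finset.range k, c' i * 4^(k-i) + 1
       < ∑ i ∈ Finset.range k, (if i < i0 then c i else if i = i0 then 1 else 0) * 4^(k-i)) := by
  have hsplit : ∀ d : ℕ → ℕ, ∑ i ∈ Finset.range k, d i
      = ∑ i ∈ Finset.range i0, d i + d i0 + ∑ i ∈ Finset.Ico (i0+1) k, d i := by
    intro d
    rw [Finset.range_eq_Ico, ← Finset.sum_Ico_consecutive _ (Nat.zero_le (i0+1)) hi0,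
      ← Finset.range_eq_Ico]
    rw [Finset.sum_range_succ]
  constructor
  · apply Finset.sum_le_sum
    intro i _
    split_ifs with h h'
    · exact le_rfl
    · subst h'; rw [h1]
    · simp
  · rw [hsplit (fun i => (if i < i0 then c i else if i = i0 then 1 else 0) * 4^(k-i)),
        hsplit (fun i => c' i * 4^(k-i))]
    have e1 : ∑ i ∈ Finset.range i0, (if i < i0 then c i else if i = i0 then 1 else 0) * 4^(k-i)
        = ∑ i ∈ Finset.range i0, c i * 4^(k-i) := by
      apply Finset.sum_congr rfl
      intro i hi
      rw [if_pos (Finset.mem_range.mp hi)]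
    have e2 : ∑ i ∈ Finset.Ico (i0+1) k, (if i < i0 then c i else if i = i0 then 1 else 0) * 4^(k-i) = 0 := by
      apply Finset.sum_eq_zero
      intro i hi
      simp only [Finset.mem_Ico] at hi
      rw [if_neg (by omega), if_neg (by omega), zero_mul]
    have e3 : ∑ i ∈ Finset.range i0, c' i * 4^(k-i) = ∑ i ∈ Finset.range i0, c i * 4^(k-i) := by
      apply Finset.sum_congr rfl
      intro i hi
      rw [hlt i (Finset.mem_range.mp hi)]
    have e4 : ∑ i ∈ Finset.Ico (i0+1) k, c' i * 4^(k-i) ≤ ∑ i ∈ Finset.Ico (i0+1) k, 4^(k-i) := by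
      apply Finset.sum_le_sum
      intro i _
      calc c' i * 4^(k-i) ≤ 1 * 4^(k-i) := Nat.mul_le_mul_right _ (hc' i)
        _ = 4^(k-i) := one_mul _
    have e5 := geom_aux i0 k hi0
    rw [e1, e2, e3, h0]
    rw [if_neg (lt_irrefl i0), if_pos rfl, one_mul]
    omega

/-- column coefficient: bit (i,j) of the matrix, as 0/1, with out-of-range = 0. -/
private def colc (n : ℕ) (ε : Fin (n/2) × Fin ((n+1)/2) → Bool) (j i : ℕ) : ℕ :=
  if h : i < n/2 then
    (if h2 : j < (n+1)/2 then (if ε (⟨i, h⟩, ⟨j, h2⟩) then 1 else 0) else 0)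
  else 0

private lemma colc_le (n : ℕ) (ε : Fin (n/2) × Fin ((n+1)/2) → Bool) (j i : ℕ) :
    colc n ε j i ≤ 1 := by
  unfold colc; split_ifs <;> simp

/-- the weight function on the ground set. -/
private def wfun (n : ℕ) (ε : Fin (n/2) × Fin ((n+1)/2) → Bool) (v : Fin n) : ℕ :=
  if (v : ℕ) < n/2 then 4 ^ (n/2 - (v : ℕ))
  else (∑ i ∈ Finset.range (n/2), colc n ε ((v : ℕ) - n/2) i * 4 ^ (n/2 - i)) + 1

/-- For every positive integer `n`, there is a family of
`2^{⌊n/2⌋·⌈n/2⌉}` additive set functions on `[n]` that are pairwise order-different. -/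
theorem stmt16 (n : ℕ) (hn : 0 < n) :
    ∃ F : Set (Finset (Fin n) → ℝ), F.Finite ∧ F.ncard = 2 ^ ((n / 2) * ((n + 1) / 2)) ∧
      (∀ f ∈ F, ∃ w : Fin n → ℝ, ∀ X : Finset (Fin n), f X = ∑ v ∈ X, w v) ∧
      (∀ f ∈ F, ∀ g ∈ F, f ≠ g →
        ∃ X Y : Finset (Fin n), ¬(f X ≤ f Y ↔ g X ≤ g Y)) := by
  classical
  set k := n / 2 with hk
  set m := (n + 1) / 2 with hm
  have hkm : k + m = n := by omega
  have hkn : k ≤ n := by omega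
  set Φ : (Fin k × Fin m → Bool) → Finset (Fin n) → ℝ :=
    fun ε X => ((∑ v ∈ X, wfun n ε v : ℕ) : ℝ) with hΦ
  -- core: one-sided order difference witness
  have core : ∀ (ε ε' : Fin k × Fin m → Bool) (i0 : Fin k) (j : Fin m),
      ε (i0, j) = true → ε' (i0, j) = false →
      (∀ i : Fin k, (i : ℕ) < (i0 : ℕ) → ε' (i, j) = ε (i, j)) →
      ∃ X Y : Finset (Fin n), Φ ε X ≤ Φ ε Y ∧ ¬ (Φ ε' X ≤ Φ ε' Y) := by
    intro ε ε' i0 j hT hF hloweq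
    have hi0k : (i0 : ℕ) < k := i0.isLt
    have hjm : (j : ℕ) < m := j.isLt
    have hjk : k + (j : ℕ) < n := by omega
    set bj : Fin n := ⟨k + (j : ℕ), hjk⟩ with hbj
    set aM : ℕ → Fin n := fun i => ⟨i % n, Nat.mod_lt i hn⟩ with haM
    set T : Finset ℕ := (Finset.range k).filter
      (fun i => (i < (i0 : ℕ) ∧ colc n ε (j : ℕ) i = 1) ∨ i = (i0 : ℕ)) with hTdef
    -- value at bj
    have hb : ∀ δ : Fin k × Fin m → Bool,
        wfun n δ bj = (∑ i ∈ Finset.range k, colc n δ (j : ℕ) i * 4 ^ (k - i)) + 1 := by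
      intro δ
      have h1 : ¬ ((bj : ℕ) < k) := by simp [hbj]
      have h2 : (bj : ℕ) - k = (j : ℕ) := by simp [hbj]
      rw [wfun, if_neg h1, h2]
    -- value of the sum over X
    have hX : ∀ δ : Fin k × Fin m → Bool,
        (∑ v ∈ T.image aM, wfun n δ v)
          = ∑ i ∈ Finset.range k,
              (if i < (i0 : ℕ) then colc n ε (j : ℕ) i else if i = (i0 : ℕ) then 1 else 0)
                * 4 ^ (k - i) := by
      intro δ
      have hTsub : ∀ i ∈ T, i < k := by
        intro i hi
        simp only [hTdef, Finset.mem_filter, Finset.mem_range] at hi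
        exact hi.1
      have hinjT : Set.InjOn aM T := by
        intro i1 h1 i2 h2 he
        have l1 : i1 < n := lt_of_lt_of_le (hTsub i1 h1) hkn
        have l2 : i2 < n := lt_of_lt_of_le (hTsub i2 h2) hkn
        have : i1 % n = i2 % n := congrArg Fin.val he
        rwa [Nat.mod_eq_of_lt l1, Nat.mod_eq_of_lt l2] at this
      rw [Finset.sum_image hinjT]
      have hval : ∀ i ∈ T, wfun n δ (aM i) = 4 ^ (k - i) := by
        intro i hi
        have hik : i < k := hTsub i hi
        have hmod : (aM i : ℕ) = i := Nat.mod_eq_of_lt (lt_of_lt_of_le hik hkn)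
        rw [wfun, hmod, if_pos hik]
      rw [Finset.sum_congr rfl hval, hTdef, Finset.sum_filter]
      apply Finset.sum_congr rfl
      intro i _
      by_cases hlt : i < (i0 : ℕ)
      · by_cases hc1 : colc n ε (j : ℕ) i = 1
        · rw [if_pos (Or.inl ⟨hlt, hc1⟩), if_pos hlt, hc1, one_mul]
        · have hc0 : colc n ε (j : ℕ) i = 0 := by
            have := colc_le n ε (j : ℕ) i; omega
          rw [if_neg (by push_neg; exact ⟨fun _ => hc1, by omega⟩),
            if_pos hlt, hc0, zero_mul]
      · by_cases heq : i = (i0 : ℕ)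
        · rw [if_pos (Or.inr heq), if_neg hlt, if_pos heq, one_mul]
        · rw [if_neg (by push_neg; exact ⟨fun h => absurd h hlt, heq⟩),
            if_neg hlt, if_neg heq, zero_mul]
    -- apply key lemma
    have hc'le : ∀ i, colc n ε' (j : ℕ) i ≤ 1 := fun i => colc_le n ε' (j : ℕ) i
    have hcolT : colc n ε (j : ℕ) (i0 : ℕ) = 1 := by
      rw [colc, dif_pos hi0k, dif_pos hjm]
      simp [hT]
    have hcolF : colc n ε' (j : ℕ) (i0 : ℕ) = 0 := by
      rw [colc, dif_pos hi0k, dif_pos hjm]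
      simp [hF]
    have hloweq' : ∀ i < (i0 : ℕ), colc n ε' (j : ℕ) i = colc n ε (j : ℕ) i := by
      intro i hi
      have hik : i < k := lt_trans hi hi0k
      rw [colc, colc, dif_pos hik, dif_pos hjm, dif_pos hik, dif_pos hjm,
        hloweq ⟨i, hik⟩ hi]
    obtain ⟨k1, k2⟩ := key k (i0 : ℕ) hi0k (colc n ε (j : ℕ)) (colc n ε' (j : ℕ))
      hc'le hloweq' hcolT hcolF
    refine ⟨T.image aM, {bj}, ?_, ?_⟩
    · show ((∑ v ∈ T.image aM, wfun n ε v : ℕ) : ℝ) ≤ ((∑ v ∈ {bj}, wfun n ε v : ℕ) : ℝ)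
      rw [Finset.sum_singleton, hX ε, hb ε]
      exact_mod_cast le_trans k1 (Nat.le_succ _)
    · show ¬ (((∑ v ∈ T.image aM, wfun n ε' v : ℕ) : ℝ) ≤ ((∑ v ∈ {bj}, wfun n ε' v : ℕ) : ℝ))
      rw [Finset.sum_singleton, hX ε', hb ε', not_le]
      exact_mod_cast k2
  -- pairwise order difference
  have hdiff : ∀ ε ε' : Fin k × Fin m → Bool, ε ≠ ε' →
      ∃ X Y : Finset (Fin n), ¬ (Φ ε X ≤ Φ ε Y ↔ Φ ε' X ≤ Φ ε' Y) := by
    intro ε ε' hne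
    obtain ⟨p, hp⟩ := Function.ne_iff.mp hne
    set j : Fin m := p.2 with hj
    set D : Finset (Fin k) := Finset.univ.filter (fun i => ε (i, j) ≠ ε' (i, j)) with hD
    have hDne : D.Nonempty := ⟨p.1, by simp [hD, hj, hp]⟩
    set i0 : Fin k := D.min' hDne with hi0
    have hi0D : i0 ∈ D := Finset.min'_mem D hDne
    have hi0ne : ε (i0, j) ≠ ε' (i0, j) := by
      simpa [hD] using hi0D
    have hlow : ∀ i : Fin k, (i : ℕ) < (i0 : ℕ) → ε (i, j) = ε' (i, j) := by
      intro i hi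
      by_contra hcon
      have : i ∈ D := by simp [hD, hcon]
      have := Finset.min'_le D i this
      omega
    cases hε : ε (i0, j) with
    | true =>
      have hε' : ε' (i0, j) = false := by
        cases hε'' : ε' (i0, j)
        · rfl
        · rw [hε, hε''] at hi0ne; exact absurd rfl hi0ne
      obtain ⟨X, Y, h1, h2⟩ := core ε ε' i0 j hε hε'
        (fun i hi => (hlow i hi).symm)
      exact ⟨X, Y, fun hiff => h2 (hiff.mp h1)⟩
    | false =>
      have hε' : ε' (i0, j) = true := by
        cases hε'' : ε' (i0, j)
        · rw [hε, hε''] at hi0ne; exact absurd rfl hi0ne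
        · rfl
      obtain ⟨X, Y, h1, h2⟩ := core ε' ε i0 j hε' hε
        (fun i hi => hlow i hi)
      exact ⟨X, Y, fun hiff => h2 (hiff.mpr h1)⟩
  -- injectivity
  have hinj : Function.Injective Φ := by
    intro ε ε' h
    by_contra hne
    obtain ⟨X, Y, hXY⟩ := hdiff ε ε' hne
    apply hXY
    rw [h]
  -- assemble
  refine ⟨↑((Finset.univ : Finset (Fin k × Fin m → Bool)).image Φ),
    Finset.finite_toSet _, ?_, ?_, ?_⟩
  · rw [Set.ncard_coe_finset, Finset.card_image_of_injective _ hinj, Finset.card_univ,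
      Fintype.card_fun]
    simp
  · intro f hf
    simp only [Finset.coe_image, Set.mem_image, Finset.mem_coe, Finset.mem_univ] at hf
    obtain ⟨ε, _, hε⟩ := hf
    refine ⟨fun v => ((wfun n ε v : ℕ) : ℝ), fun X => ?_⟩
    rw [← hε]
    show ((∑ v ∈ X, wfun n ε v : ℕ) : ℝ) = _
    push_cast
    rfl
  · intro f hf g hg hfg
    simp only [Finset.coe_image, Set.mem_image, Finset.mem_coe, Finset.mem_univ] at hf hg
    obtain ⟨ε, _, hε⟩ := hf
    obtain ⟨ε', _, hε'⟩ := hg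
    subst hε hε'
    exact hdiff ε ε' (fun h => hfg (by rw [h]))
end

section
/- Let M_1 and M_2 be distinct matroids on the same finite ground set E, with rank functions r_1 and r_2. Then there exist a set X ⊆ E and an element e ∈ E ∖ X such that, after possibly swapping the indices 1 and 2, r_1(X) = r_2(X) = r_2(X ∪ {e}) and r_1(X ∪ {e}) = r_1(X) + 1. Consequently, r_1 and r_2 are order-different set functions. -/
/-- A matroid on a finite ground set `E`, given by its independence system. -/
structure FinsetMatroid (E : Type*) [DecidableEq E] where
  Indep : Finset E → Prop
  empty_indep : Indep ∅
  subset_indep : ∀ ⦃I J : Finset E⦄, Indep J → I ⊆ J → Indep I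
  exchange : ∀ ⦃I J : Finset E⦄, Indep I → Indep J → I.card < J.card →
    ∃ e ∈ J, e ∉ I ∧ Indep (insert e I)

/-- `r` is the rank function of the matroid `M`: `r X` is the maximum cardinality of an
independent subset of `X`. -/
def IsRankFunctionOf {E : Type*} [DecidableEq E] (M : FinsetMatroid E)
    (r : Finset E → ℕ) : Prop :=
  ∀ X : Finset E, IsGreatest {c : ℕ | ∃ I ⊆ X, M.Indep I ∧ I.card = c} (r X)

lemma rank_of_indep {E : Type*} [DecidableEq E] {M : FinsetMatroid E}
    {r : Finset E → ℕ} (hr : IsRankFunctionOf M r) {X : Finset E}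
    (hX : M.Indep X) : r X = X.card := by
  obtain ⟨J, hJX, _, hJc⟩ := (hr X).1
  exact le_antisymm (hJc ▸ Finset.card_le_card hJX) ((hr X).2 ⟨X, subset_rfl, hX, rfl⟩)

lemma key_s17 {E : Type*} [DecidableEq E] {M₁ M₂ : FinsetMatroid E}
    {r₁ r₂ : Finset E → ℕ}
    (hr₁ : IsRankFunctionOf M₁ r₁) (hr₂ : IsRankFunctionOf M₂ r₂)
    {I : Finset E} (hI₁ : M₁.Indep I) (hI₂ : ¬ M₂.Indep I)
    (hmin : ∀ J : Finset E, J ⊂ I → (M₁.Indep J ↔ M₂.Indep J)) :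
    ∃ (X : Finset E) (e : E), e ∉ X ∧
      r₁ X = r₂ X ∧ r₂ (insert e X) = r₂ X ∧ r₁ (insert e X) = r₁ X + 1 := by
  have hne : I.Nonempty := by
    rcases I.eq_empty_or_nonempty with h | h
    · exact absurd (h ▸ M₂.empty_indep) hI₂
    · exact h
  obtain ⟨e, he⟩ := hne
  set X := I.erase e with hXdef
  have heX : e ∉ X := Finset.notMem_erase e I
  have hins : insert e X = I := Finset.insert_erase he
  have hXI : X ⊂ I := Finset.erase_ssubset he
  have hX₁ : M₁.Indep X := M₁.subset_indep hI₁ hXI.subset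
  have hX₂ : M₂.Indep X := (hmin X hXI).mp hX₁
  have hr₁X : r₁ X = X.card := rank_of_indep hr₁ hX₁
  have hr₂X : r₂ X = X.card := rank_of_indep hr₂ hX₂
  have hcard : I.card = X.card + 1 := by
    rw [← hins, Finset.card_insert_of_notMem heX]
  have hr₁I : r₁ I = X.card + 1 := by rw [rank_of_indep hr₁ hI₁, hcard]
  have hr₂I : r₂ I = X.card := by
    refine le_antisymm ?_ ((hr₂ I).2 ⟨X, hXI.subset, hX₂, rfl⟩)
    obtain ⟨J, hJI, hJ₂, hJc⟩ := (hr₂ I).1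
    have hJne : J ≠ I := fun h => hI₂ (h ▸ hJ₂)
    have := Finset.card_lt_card (lt_of_le_of_ne hJI hJne)
    omega
  exact ⟨X, e, heX, by rw [hr₁X, hr₂X], by rw [hins, hr₂I, hr₂X],
    by rw [hins, hr₁I, hr₁X]⟩

/-- If `M₁ ≠ M₂` are distinct matroids on the same finite ground set `E`,
with rank functions `r₁` and `r₂`, then there are `X ⊆ E` and `e ∈ E ∖ X` such that, after
possibly swapping the indices, `r₁(X) = r₂(X) = r₂(X ∪ {e})` and `r₁(X ∪ {e}) = r₁(X) + 1`;
consequently `r₁` and `r₂` are order-different. -/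
theorem stmt17 {E : Type*} [Fintype E] [DecidableEq E]
    (M₁ M₂ : FinsetMatroid E) (hne : M₁ ≠ M₂)
    (r₁ r₂ : Finset E → ℕ)
    (hr₁ : IsRankFunctionOf M₁ r₁) (hr₂ : IsRankFunctionOf M₂ r₂) :
    (∃ (X : Finset E) (e : E), e ∉ X ∧
      ((r₁ X = r₂ X ∧ r₂ (insert e X) = r₂ X ∧ r₁ (insert e X) = r₁ X + 1) ∨
       (r₂ X = r₁ X ∧ r₁ (insert e X) = r₁ X ∧ r₂ (insert e X) = r₂ X + 1))) ∧
    ∃ X Y : Finset E, ¬(r₁ X ≤ r₁ Y ↔ r₂ X ≤ r₂ Y) := by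
  -- the matroids differ on some set
  have hdiff : ∃ I : Finset E, ¬ (M₁.Indep I ↔ M₂.Indep I) := by
    by_contra h
    push_neg at h
    apply hne
    cases M₁ with
    | mk i₁ a b c =>
      cases M₂ with
      | mk i₂ a' b' c' =>
        simp only [FinsetMatroid.mk.injEq]
        funext J
        exact propext (h J)
  -- choose one of minimal cardinality
  set S : Set ℕ := {n | ∃ I : Finset E, I.card = n ∧ ¬ (M₁.Indep I ↔ M₂.Indep I)} with hS
  obtain ⟨I₀, hI₀⟩ := hdiff
  have hSne : S.Nonempty := ⟨I₀.card, I₀, rfl, hI₀⟩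
  obtain ⟨n, hnS, hnmin⟩ := Nat.lt_wfRel.wf.has_min S hSne
  obtain ⟨I, hIc, hI⟩ := hnS
  have hmin : ∀ J : Finset E, J ⊂ I → (M₁.Indep J ↔ M₂.Indep J) := by
    intro J hJ
    by_contra hJd
    exact hnmin J.card ⟨J, rfl, hJd⟩ (hIc ▸ Finset.card_lt_card hJ)
  -- which matroid has I independent?
  by_cases h1 : M₁.Indep I
  · have h2 : ¬ M₂.Indep I := fun h => hI ⟨fun _ => h, fun _ => h1⟩
    obtain ⟨X, e, heX, hA, hB, hC⟩ := key_s17 hr₁ hr₂ h1 h2 hmin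
    exact ⟨⟨X, e, heX, Or.inl ⟨hA, hB, hC⟩⟩, ⟨insert e X, X, by omega⟩⟩
  · have h2 : M₂.Indep I := by
      by_contra h2
      exact hI ⟨fun h => absurd h h1, fun h => absurd h h2⟩
    obtain ⟨X, e, heX, hA, hB, hC⟩ := key_s17 hr₂ hr₁ h2 h1 (fun J hJ => (hmin J hJ).symm)
    exact ⟨⟨X, e, heX, Or.inr ⟨hA, hB, hC⟩⟩, ⟨insert e X, X, by omega⟩⟩
end
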